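/- arXiv:1502.02247 — 12 statements merged into one kernel-verified Lean document; each statement's English description precedes it below -/
import Mathlib

section
/- Let 𝓛 be a real c×c matrix whose off-diagonal entries are nonpositive and whose row sums and column sums are all zero. Then for every vector γ ∈ ℝ^c one has γᵀ 𝓛 Exp(γ) ≥ 0, and equality holds if and only if γ_i = γ_j for every pair of indices i ≠ j with 𝓛_{ij} ≠ 0. -/
/-!
Summing by rows and columns, the balance conditions turn `γᵀ 𝓛 Exp(γ)` into
`∑ᵢⱼ (-𝓛ᵢⱼ) (exp γᵢ - exp γⱼ - exp γⱼ (γᵢ - γⱼ))`. Each bracket is the gap between `exp` and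
its tangent line at `γⱼ`, which is nonnegative by convexity and vanishes only when `γᵢ = γⱼ`,
while the weights `-𝓛ᵢⱼ` are nonnegative off the diagonal.
-/

open Matrix Finset Real

/-- The Bregman divergence of `exp`. -/
noncomputable def expBregman (x y : ℝ) : ℝ := exp x - exp y - exp y * (x - y)

lemma expBregman_eq (x y : ℝ) : expBregman x y = exp y * (exp (x - y) - (x - y) - 1) := by
  rw [expBregman, exp_sub]
  field_simp
  ring

lemma expBregman_nonneg (x y : ℝ) : 0 ≤ expBregman x y := by
  rw [expBregman_eq]
  exact mul_nonneg (exp_pos y).le (by linarith [add_one_le_exp (x - y)])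

lemma expBregman_eq_zero_iff {x y : ℝ} : expBregman x y = 0 ↔ x = y := by
  rw [expBregman_eq, mul_eq_zero, or_iff_right (exp_ne_zero y)]
  constructor
  · intro h
    by_contra hne
    linarith [add_one_lt_exp (sub_ne_zero.mpr hne)]
  · rintro rfl
    simp

namespace Matrix

variable {ι : Type*} {L : Matrix ι ι ℝ}

lemma neg_mul_nonneg_of_offDiag_nonpos (hoff : ∀ i j, i ≠ j → L i j ≤ 0) {D : ι → ι → ℝ}
    (hD : ∀ i j, 0 ≤ D i j) (hdiag : ∀ i, D i i = 0) (i j : ι) : 0 ≤ -L i j * D i j := by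
  rcases eq_or_ne i j with rfl | hij
  · simp [hdiag]
  · exact mul_nonneg (neg_nonneg.mpr (hoff i j hij)) (hD i j)

variable [Fintype ι]

lemma dotProduct_mulVec_eq_sum_sum_mul_sub (hcol : ∀ j, ∑ i, L i j = 0) (γ v : ι → ℝ) :
    γ ⬝ᵥ L *ᵥ v = ∑ i, ∑ j, L i j * v j * (γ i - γ j) := by
  have hvγ : ∑ i, ∑ j, L i j * v j * γ j = 0 := by
    rw [sum_comm]
    exact sum_eq_zero fun j _ => by rw [← sum_mul, ← sum_mul, hcol, zero_mul, zero_mul]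
  simp only [mul_sub, sum_sub_distrib, hvγ, sub_zero, dotProduct, mulVec, mul_sum]
  exact sum_congr rfl fun i _ => sum_congr rfl fun j _ => by ring

lemma sum_sum_mul_sub_eq_zero (hrow : ∀ i, ∑ j, L i j = 0) (hcol : ∀ j, ∑ i, L i j = 0)
    (a : ι → ℝ) : ∑ i, ∑ j, L i j * (a i - a j) = 0 := by
  simp only [mul_sub, sum_sub_distrib]
  rw [sum_comm (f := fun i j => L i j * a j)]
  simp [← sum_mul, hrow, hcol]

lemma dotProduct_mulVec_exp_eq_sum_sum_expBregman (hrow : ∀ i, ∑ j, L i j = 0)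
    (hcol : ∀ j, ∑ i, L i j = 0) (γ : ι → ℝ) :
    γ ⬝ᵥ L *ᵥ (fun j => exp (γ j)) = ∑ i, ∑ j, -L i j * expBregman (γ i) (γ j) := by
  rw [dotProduct_mulVec_eq_sum_sum_mul_sub hcol, ← sub_zero (∑ i, ∑ j, _),
    ← sum_sum_mul_sub_eq_zero hrow hcol (fun i => exp (γ i))]
  simp only [← sum_sub_distrib]
  exact sum_congr rfl fun i _ => sum_congr rfl fun j _ => by rw [expBregman]; ring

lemma sum_sum_neg_mul_eq_zero_iff (hoff : ∀ i j, i ≠ j → L i j ≤ 0) {D : ι → ι → ℝ}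
    (hD : ∀ i j, 0 ≤ D i j) (hdiag : ∀ i, D i i = 0) :
    ∑ i, ∑ j, -L i j * D i j = 0 ↔ ∀ i j, i ≠ j → L i j ≠ 0 → D i j = 0 := by
  have hterm := neg_mul_nonneg_of_offDiag_nonpos hoff hD hdiag
  have hinner (i : ι) : ∑ j, -L i j * D i j = 0 ↔ ∀ j, -L i j * D i j = 0 := by
    simpa using sum_eq_zero_iff_of_nonneg (s := univ) fun j _ => hterm i j
  rw [Fintype.sum_eq_zero_iff_of_nonneg (fun i => sum_nonneg fun j _ => hterm i j)]
  simp only [funext_iff, Pi.zero_apply, hinner, mul_eq_zero, neg_eq_zero]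
  refine ⟨fun h i j _ hL => (h i j).resolve_left hL, fun h i j => ?_⟩
  rcases eq_or_ne i j with rfl | hij
  · exact Or.inr (hdiag i)
  · exact or_iff_not_imp_left.mpr (h i j hij)

end Matrix

/-- Fundamental inequality for balanced Laplacian matrices (Proposition 1):
for a real `c × c` matrix `L` with nonpositive off-diagonal entries and zero row
and column sums, `γᵀ L Exp(γ) ≥ 0`, with equality iff `γ` is constant on every
edge of the graph defined by the nonzero off-diagonal entries of `L`. -/
theorem stmt_0 (c : ℕ) (L : Matrix (Fin c) (Fin c) ℝ)
    (hoff : ∀ i j, i ≠ j → L i j ≤ 0)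
    (hrow : ∀ i, ∑ j, L i j = 0)
    (hcol : ∀ j, ∑ i, L i j = 0)
    (γ : Fin c → ℝ) :
    0 ≤ γ ⬝ᵥ L.mulVec (fun j => Real.exp (γ j)) ∧
    (γ ⬝ᵥ L.mulVec (fun j => Real.exp (γ j)) = 0 ↔
      ∀ i j, i ≠ j → L i j ≠ 0 → γ i = γ j) := by
  have hD : ∀ i j, 0 ≤ expBregman (γ i) (γ j) := fun i j => expBregman_nonneg _ _
  have hdiag : ∀ i, expBregman (γ i) (γ i) = 0 := fun i => expBregman_eq_zero_iff.mpr rfl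
  rw [dotProduct_mulVec_exp_eq_sum_sum_expBregman hrow hcol,
    sum_sum_neg_mul_eq_zero_iff hoff hD hdiag]
  exact ⟨sum_nonneg fun i _ => sum_nonneg fun j _ =>
    neg_mul_nonneg_of_offDiag_nonpos hoff hD hdiag i j, by simp only [expBregman_eq_zero_iff]⟩
end

section
/- Let Z be a real m×c matrix with nonnegative entries, let 𝓛 be a real c×c matrix whose off-diagonal entries are nonpositive and whose row sums and column sums are all zero, and let x* ∈ ℝ^m be a strictly positive vector. Then for every strictly positive x** ∈ ℝ^m the following are equivalent: (i) Z 𝓛 Exp(Zᵀ Ln(x**/x*)) = 0 (x** is a positive equilibrium); (ii) 𝓛 Exp(Zᵀ Ln(x**/x*)) = 0 (x** is complex-balanced); (iii) setting γ = Zᵀ Ln(x**/x*), one has γ_i = γ_j for every pair i ≠ j with 𝓛_{ij} ≠ 0. In particular, every positive equilibrium is complex-balanced, and the set of all positive equilibria equals { x** ∈ ℝ^m_{>0} : Sᵀ Ln x** = Sᵀ Ln x* } where Sᵀγ collects the differences γ_i − γ_j over the edges of the graph defined by the nonzero off-diagonal entries of 𝓛. -/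
/-!
Put `γ = Zᵀ Ln(x**/x*)`. If `Z 𝓛 Exp γ = 0` then `γ ⬝ 𝓛 Exp γ = Ln(x**/x*) ⬝ Z 𝓛 Exp γ = 0`.
Because the rows and columns of `𝓛` sum to zero, `γ ⬝ 𝓛 Exp γ` equals
`∑ᵢⱼ (-𝓛ᵢⱼ) (e^{γᵢ} - e^{γⱼ}(1 + γᵢ - γⱼ))`, a sum of nonnegative terms by convexity of `exp`,
and the term of an edge `i ≠ j` vanishes only when `γᵢ = γⱼ`. Conversely, if `γ` is constant on
edges then each row of `𝓛 Exp γ` is `e^{γᵢ}` times a row sum of `𝓛`, which is zero.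
-/

open Matrix

lemma exp_mul_one_add_sub_le_exp (a b : ℝ) : Real.exp b * (1 + a - b) ≤ Real.exp a := by
  calc Real.exp b * (1 + a - b) ≤ Real.exp b * Real.exp (a - b) := by
        gcongr; linarith [Real.add_one_le_exp (a - b)]
    _ = Real.exp a := by rw [← Real.exp_add, add_sub_cancel]

lemma exp_mul_one_add_sub_lt_exp {a b : ℝ} (hab : a ≠ b) :
    Real.exp b * (1 + a - b) < Real.exp a := by
  calc Real.exp b * (1 + a - b) < Real.exp b * Real.exp (a - b) := by
        gcongr; linarith [Real.add_one_lt_exp (sub_ne_zero.mpr hab)]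
    _ = Real.exp a := by rw [← Real.exp_add, add_sub_cancel]

namespace Matrix

variable {ι : Type*} [Fintype ι] {L : Matrix ι ι ℝ}

lemma mulVec_exp_eq_zero_of_forall_adj (hrow : ∀ i, ∑ j, L i j = 0) {γ : ι → ℝ}
    (hγ : ∀ i j, i ≠ j → L i j ≠ 0 → γ i = γ j) :
    L *ᵥ (fun i => Real.exp (γ i)) = 0 := by
  funext i
  have hterm : ∀ j, L i j * Real.exp (γ j) = L i j * Real.exp (γ i) := fun j => by
    by_cases hij : i = j
    · rw [hij]
    by_cases hL : L i j = 0
    · simp [hL]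
    · rw [hγ i j hij hL]
  simp only [mulVec, dotProduct, hterm, ← Finset.sum_mul, hrow, zero_mul, Pi.zero_apply]

lemma dotProduct_mulVec_exp_eq_sum (hrow : ∀ i, ∑ j, L i j = 0) (hcol : ∀ j, ∑ i, L i j = 0)
    (γ : ι → ℝ) :
    γ ⬝ᵥ L *ᵥ (fun i => Real.exp (γ i)) =
      ∑ i, ∑ j, -L i j * (Real.exp (γ i) - Real.exp (γ j) * (1 + γ i - γ j)) := by
  have hrow' : ∀ f : ι → ℝ, ∑ i, ∑ j, L i j * f i = 0 := fun f => by
    simp [← Finset.sum_mul, hrow]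
  have hcol' : ∀ f : ι → ℝ, ∑ i, ∑ j, L i j * f j = 0 := fun f => by
    rw [Finset.sum_comm]; simp [← Finset.sum_mul, hcol]
  calc γ ⬝ᵥ L *ᵥ (fun i => Real.exp (γ i))
      = ∑ i, ∑ j, L i j * (γ i * Real.exp (γ j)) := by
        simp only [dotProduct, mulVec, Finset.mul_sum]
        exact Finset.sum_congr rfl fun i _ => Finset.sum_congr rfl fun j _ => by ring
    _ = ∑ i, ∑ j, L i j * (γ i * Real.exp (γ j)) + ∑ i, ∑ j, L i j * Real.exp (γ j)
          - ∑ i, ∑ j, L i j * Real.exp (γ i) - ∑ i, ∑ j, L i j * (γ j * Real.exp (γ j)) := by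
        rw [hrow', hcol', hcol']; ring
    _ = _ := by
        simp only [← Finset.sum_add_distrib, ← Finset.sum_sub_distrib]
        congr! 2; ring

lemma forall_adj_eq_of_dotProduct_mulVec_exp_eq_zero (hoff : ∀ i j, i ≠ j → L i j ≤ 0)
    (hrow : ∀ i, ∑ j, L i j = 0) (hcol : ∀ j, ∑ i, L i j = 0) {γ : ι → ℝ}
    (h : γ ⬝ᵥ L *ᵥ (fun i => Real.exp (γ i)) = 0) :
    ∀ i j, i ≠ j → L i j ≠ 0 → γ i = γ j := by
  set d : ι × ι → ℝ := fun p =>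
    -L p.1 p.2 * (Real.exp (γ p.1) - Real.exp (γ p.2) * (1 + γ p.1 - γ p.2))
  have hd_nonneg : 0 ≤ d := fun p => by
    rcases eq_or_ne p.1 p.2 with hp | hp
    · simp [d, hp]
    · exact mul_nonneg (neg_nonneg.mpr (hoff _ _ hp))
        (sub_nonneg.mpr (exp_mul_one_add_sub_le_exp _ _))
  have hd_zero : d = 0 := by
    rw [← Fintype.sum_eq_zero_iff_of_nonneg hd_nonneg, Fintype.sum_prod_type' (f := fun i j => d (i, j)),
      ← h, dotProduct_mulVec_exp_eq_sum hrow hcol]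
  intro i j hij hL
  by_contra hγ
  have hpos : 0 < d (i, j) := mul_pos (neg_pos.mpr ((hoff i j hij).lt_of_ne hL))
    (sub_pos.mpr (exp_mul_one_add_sub_lt_exp hγ))
  exact hpos.ne' (congrFun hd_zero (i, j))

lemma mulVec_exp_eq_zero_iff (hoff : ∀ i j, i ≠ j → L i j ≤ 0) (hrow : ∀ i, ∑ j, L i j = 0)
    (hcol : ∀ j, ∑ i, L i j = 0) (γ : ι → ℝ) :
    L *ᵥ (fun i => Real.exp (γ i)) = 0 ↔ ∀ i j, i ≠ j → L i j ≠ 0 → γ i = γ j :=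
  ⟨fun h => forall_adj_eq_of_dotProduct_mulVec_exp_eq_zero hoff hrow hcol
      (by rw [h, dotProduct_zero]),
    mulVec_exp_eq_zero_of_forall_adj hrow⟩

lemma mulVec_mulVec_exp_transpose_eq_zero_iff {κ : Type*} [Fintype κ]
    (hoff : ∀ i j, i ≠ j → L i j ≤ 0) (hrow : ∀ i, ∑ j, L i j = 0)
    (hcol : ∀ j, ∑ i, L i j = 0) (Z : Matrix κ ι ℝ) (w : κ → ℝ) :
    Z *ᵥ L *ᵥ (fun i => Real.exp ((Zᵀ *ᵥ w) i)) = 0 ↔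
      L *ᵥ (fun i => Real.exp ((Zᵀ *ᵥ w) i)) = 0 := by
  refine ⟨fun h => mulVec_exp_eq_zero_of_forall_adj hrow ?_, fun h => by rw [h, mulVec_zero]⟩
  refine forall_adj_eq_of_dotProduct_mulVec_exp_eq_zero hoff hrow hcol ?_
  rw [mulVec_transpose] at h ⊢
  rw [← dotProduct_mulVec, h, dotProduct_zero]

end Matrix

theorem stmt_1_general (m c : ℕ) (Z : Matrix (Fin m) (Fin c) ℝ)
    (L : Matrix (Fin c) (Fin c) ℝ)
    (hoff : ∀ i j, i ≠ j → L i j ≤ 0)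
    (hrow : ∀ i, ∑ j, L i j = 0)
    (hcol : ∀ j, ∑ i, L i j = 0)
    (xs : Fin m → ℝ) (hxs : ∀ k, 0 < xs k)
    (x : Fin m → ℝ) (hx : ∀ k, 0 < x k) :
    (Z.mulVec (L.mulVec (fun i =>
        Real.exp (Zᵀ.mulVec (fun k => Real.log (x k / xs k)) i))) = 0
      ↔ L.mulVec (fun i =>
          Real.exp (Zᵀ.mulVec (fun k => Real.log (x k / xs k)) i)) = 0) ∧
    (L.mulVec (fun i =>
        Real.exp (Zᵀ.mulVec (fun k => Real.log (x k / xs k)) i)) = 0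
      ↔ ∀ i j, i ≠ j → L i j ≠ 0 →
          Zᵀ.mulVec (fun k => Real.log (x k / xs k)) i =
          Zᵀ.mulVec (fun k => Real.log (x k / xs k)) j) ∧
    (Z.mulVec (L.mulVec (fun i =>
        Real.exp (Zᵀ.mulVec (fun k => Real.log (x k / xs k)) i))) = 0
      ↔ ∀ i j, i ≠ j → L i j ≠ 0 →
          Zᵀ.mulVec (fun k => Real.log (x k)) i - Zᵀ.mulVec (fun k => Real.log (x k)) j =
          Zᵀ.mulVec (fun k => Real.log (xs k)) i - Zᵀ.mulVec (fun k => Real.log (xs k)) j) := by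
  have hlog : Zᵀ *ᵥ (fun k => Real.log (x k / xs k)) =
      Zᵀ *ᵥ (fun k => Real.log (x k)) - Zᵀ *ᵥ (fun k => Real.log (xs k)) := by
    rw [← mulVec_sub]
    congr 1
    funext k
    exact Real.log_div (hx k).ne' (hxs k).ne'
  have hequil := mulVec_mulVec_exp_transpose_eq_zero_iff hoff hrow hcol Z
    (fun k => Real.log (x k / xs k))
  have hbal := mulVec_exp_eq_zero_iff hoff hrow hcol (Zᵀ *ᵥ (fun k => Real.log (x k / xs k)))
  refine ⟨hequil, hbal, hequil.trans (hbal.trans ?_)⟩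
  simp only [hlog, Pi.sub_apply, sub_eq_sub_iff_sub_eq_sub]

/-- For a complex-balanced mass action network `ẋ = −Z 𝓛 Exp(Zᵀ Ln(x/x*))` with balanced
Laplacian `𝓛` and complex-balanced equilibrium `x*`, a positive `x**` is an equilibrium
iff it is complex-balanced, iff `γ = Zᵀ Ln(x**/x*)` is constant on every edge of the graph
of nonzero off-diagonal entries of `𝓛`; moreover the set of positive equilibria is
`{x** > 0 : Sᵀ Ln x** = Sᵀ Ln x*}`, where `Sᵀγ` collects the edge differences `γᵢ − γⱼ`. -/
theorem stmt_1 (m c : ℕ) (Z : Matrix (Fin m) (Fin c) ℝ)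
    (hZ : ∀ k i, 0 ≤ Z k i)
    (L : Matrix (Fin c) (Fin c) ℝ)
    (hoff : ∀ i j, i ≠ j → L i j ≤ 0)
    (hrow : ∀ i, ∑ j, L i j = 0)
    (hcol : ∀ j, ∑ i, L i j = 0)
    (xs : Fin m → ℝ) (hxs : ∀ k, 0 < xs k)
    (x : Fin m → ℝ) (hx : ∀ k, 0 < x k) :
    (Z.mulVec (L.mulVec (fun i =>
        Real.exp (Zᵀ.mulVec (fun k => Real.log (x k / xs k)) i))) = 0
      ↔ L.mulVec (fun i =>
          Real.exp (Zᵀ.mulVec (fun k => Real.log (x k / xs k)) i)) = 0) ∧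
    (L.mulVec (fun i =>
        Real.exp (Zᵀ.mulVec (fun k => Real.log (x k / xs k)) i)) = 0
      ↔ ∀ i j, i ≠ j → L i j ≠ 0 →
          Zᵀ.mulVec (fun k => Real.log (x k / xs k)) i =
          Zᵀ.mulVec (fun k => Real.log (x k / xs k)) j) ∧
    (Z.mulVec (L.mulVec (fun i =>
        Real.exp (Zᵀ.mulVec (fun k => Real.log (x k / xs k)) i))) = 0
      ↔ ∀ i j, i ≠ j → L i j ≠ 0 →
          Zᵀ.mulVec (fun k => Real.log (x k)) i - Zᵀ.mulVec (fun k => Real.log (x k)) j =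
          Zᵀ.mulVec (fun k => Real.log (xs k)) i - Zᵀ.mulVec (fun k => Real.log (xs k)) j) :=
  stmt_1_general m c Z L hoff hrow hcol xs hxs x hx
end

section
/- Let S be a real m×r matrix and x* ∈ ℝ^m a strictly positive vector, and let E = { x ∈ ℝ^m_{>0} : Sᵀ Ln x = Sᵀ Ln x* }. Then the origin 0 ∈ ℝ^m lies in the closure of E if and only if there exists a strictly positive vector μ ∈ ℝ^m with Sᵀμ = 0. -/
/-!
If `x ∈ E` lies below `x*` in every coordinate, then `μ = Ln x* - Ln x` is strictly positive and,
since `Sᵀ Ln x = Sᵀ Ln x*`, satisfies `Sᵀ μ = 0`; points of `E` close enough to `0` are such `x`.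
Conversely, if `μ > 0` and `Sᵀ μ = 0`, the curve `t ↦ x* ∘ exp(-t μ)` stays in `E` and tends
to `0` as `t → ∞`.
-/

open Matrix Filter Topology

section PositiveEquilibria

variable {ι κ : Type*} [Fintype ι] (S : Matrix ι κ ℝ) (xs : ι → ℝ)

/-- The set `E` of positive equilibria of the paper. -/
def positiveEquilibria : Set (ι → ℝ) :=
  {x | (∀ k, 0 < x k) ∧ Sᵀ *ᵥ (fun k => Real.log (x k)) = Sᵀ *ᵥ (fun k => Real.log (xs k))}

variable {S xs}

theorem mulVec_log_sub_log_eq_zero {x : ι → ℝ} (hx : x ∈ positiveEquilibria S xs) :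
    Sᵀ *ᵥ (fun k => Real.log (xs k) - Real.log (x k)) = 0 := by
  change Sᵀ *ᵥ ((fun k => Real.log (xs k)) - fun k => Real.log (x k)) = 0
  rw [mulVec_sub, hx.2, sub_self]

theorem mul_exp_mem_positiveEquilibria (hxs : ∀ k, 0 < xs k) {μ : ι → ℝ} (hμ : Sᵀ *ᵥ μ = 0)
    (t : ℝ) : (fun k => xs k * Real.exp (t * μ k)) ∈ positiveEquilibria S xs := by
  refine ⟨fun k => mul_pos (hxs k) (Real.exp_pos _), ?_⟩
  have hlog : (fun k => Real.log (xs k * Real.exp (t * μ k))) =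
      (fun k => Real.log (xs k)) + t • μ := by
    funext k
    simp [Real.log_mul (hxs k).ne' (Real.exp_pos _).ne']
  rw [hlog, mulVec_add, mulVec_smul, hμ, smul_zero, add_zero]

end PositiveEquilibria

theorem tendsto_mul_exp_neg_mul_atTop_nhds_zero {ι : Type*} (xs : ι → ℝ) {μ : ι → ℝ}
    (hμ : ∀ k, 0 < μ k) :
    Tendsto (fun t : ℝ => fun k => xs k * Real.exp (-t * μ k)) atTop (𝓝 0) := by
  rw [tendsto_pi_nhds]
  intro k
  have hexp : Tendsto (fun t : ℝ => -t * μ k) atTop atBot :=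
    tendsto_neg_atTop_atBot.atBot_mul_const (hμ k)
  simpa using (Real.tendsto_exp_atBot.comp hexp).const_mul (xs k)

theorem exists_mem_lt_of_zero_mem_closure {ι : Type*} [Finite ι] {s : Set (ι → ℝ)}
    (h : (0 : ι → ℝ) ∈ closure s) {xs : ι → ℝ} (hxs : ∀ k, 0 < xs k) :
    ∃ x ∈ s, ∀ k, x k < xs k := by
  have hopen : IsOpen {x : ι → ℝ | ∀ k, x k < xs k} := by
    simp only [Set.ofPred_forall]
    exact isOpen_iInter_of_finite fun k => isOpen_lt (continuous_apply k) continuous_const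
  obtain ⟨x, hx_lt, hx_mem⟩ := mem_closure_iff.mp h _ hopen hxs
  exact ⟨x, hx_mem, hx_lt⟩

/-- The origin lies in the closure of the set of positive equilibria
`E = {x > 0 : Sᵀ Ln x = Sᵀ Ln x*}` iff the network satisfies mass conservation,
i.e. there is a strictly positive `μ` with `Sᵀ μ = 0`. -/
theorem stmt_2 (m r : ℕ) (S : Matrix (Fin m) (Fin r) ℝ)
    (xs : Fin m → ℝ) (hxs : ∀ k, 0 < xs k) :
    (0 : Fin m → ℝ) ∈ closure {x : Fin m → ℝ | (∀ k, 0 < x k) ∧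
        Sᵀ.mulVec (fun k => Real.log (x k)) = Sᵀ.mulVec (fun k => Real.log (xs k))}
      ↔ ∃ μ : Fin m → ℝ, (∀ k, 0 < μ k) ∧ Sᵀ.mulVec μ = 0 := by
  change (0 : Fin m → ℝ) ∈ closure (positiveEquilibria S xs) ↔ _
  constructor
  · intro h
    obtain ⟨x, hx, hlt⟩ := exists_mem_lt_of_zero_mem_closure h hxs
    exact ⟨_, fun k => sub_pos.mpr (Real.log_lt_log (hx.1 k) (hlt k)),
      mulVec_log_sub_log_eq_zero hx⟩
  · rintro ⟨μ, hμ, hSμ⟩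
    exact mem_closure_of_tendsto (tendsto_mul_exp_neg_mul_atTop_nhds_zero xs hμ)
      (Eventually.of_forall fun t => mul_exp_mem_positiveEquilibria hxs hSμ (-t))
end

section
/- Let L be a real c×c matrix (c ≥ 1) all of whose column sums are zero, i.e. 𝟙ᵀL = 0. Then all columns of the adjugate matrix adj(L) are equal; moreover, denoting by ρ ∈ ℝ^c this common column (so adj(L) = ρ 𝟙ᵀ), one has L ρ = 0. -/
/-!
Vanishing column sums say that the rows of `L` add up to zero. The entry `adj(L) i j` is the
determinant of `L` with row `j` replaced by `eᵢ`; replacing a second row `j'` by the sum of all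
rows other than `j`, which is `-L j`, and then swapping rows `j` and `j'`, turns this into the
determinant of `L` with row `j'` replaced by `eᵢ`. So all columns of `adj(L)` agree, and since
`det L = 0` (the rows are dependent) the identity `L * adj(L) = det L • 1` puts that common
column in the kernel of `L`.
-/

open Matrix

namespace Matrix

variable {n R : Type*} [Fintype n] [DecidableEq n] [CommRing R]

theorem det_updateRow_updateRow_swap (A : Matrix n n R) {i j : n} (hij : i ≠ j) (a b : n → R) :
    ((A.updateRow i a).updateRow j b).det = -((A.updateRow i b).updateRow j a).det := by
  have hswap : ((A.updateRow i a).updateRow j b).submatrix (Equiv.swap i j) id =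
      (A.updateRow i b).updateRow j a := by
    ext k l
    rcases eq_or_ne k i with rfl | hki
    · simp [hij]
    rcases eq_or_ne k j with rfl | hkj
    · simp [updateRow_ne hij]
    · simp [Equiv.swap_apply_of_ne_of_ne hki hkj, hki, hkj]
  rw [← hswap, det_permute, Equiv.Perm.sign_swap hij]
  simp

theorem det_eq_zero_of_sum_rows_eq_zero [Nonempty n] {L : Matrix n n R} (h : ∑ k, L k = 0) :
    L.det = 0 := by
  obtain ⟨j⟩ := ‹Nonempty n›
  have hrow := det_updateRow_sum L j (fun _ => 1)
  simp only [one_smul, h] at hrow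
  rw [← hrow]
  exact det_eq_zero_of_row_eq_zero j (by simp)

theorem det_updateRow_eq_of_sum_rows_eq_zero {L : Matrix n n R} (h : ∑ k, L k = 0)
    (v : n → R) (j j' : n) : (L.updateRow j v).det = (L.updateRow j' v).det := by
  rcases eq_or_ne j j' with rfl | hjj'
  · rfl
  have hsum : ∑ k, (if k = j then 0 else 1 : R) • (L.updateRow j v) k = -L j := by
    rw [← Finset.add_sum_erase _ _ (Finset.mem_univ j), if_pos rfl, zero_smul, zero_add,
      Finset.sum_congr rfl (g := fun k => L k) fun k hk => by
        have hkj := Finset.ne_of_mem_erase hk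
        rw [if_neg hkj, one_smul, updateRow_ne hkj],
      Finset.sum_erase_eq_sub (f := fun k => L k) (Finset.mem_univ j), h, zero_sub]
  calc (L.updateRow j v).det
      = ((L.updateRow j v).updateRow j' (-L j)).det := by
        rw [← hsum, det_updateRow_sum, if_neg hjj'.symm, one_smul]
    _ = -((L.updateRow j v).updateRow j' (L j)).det := by
        rw [← neg_one_smul R (L j), det_updateRow_smul, neg_one_mul]
    _ = ((L.updateRow j (L j)).updateRow j' v).det := by
        rw [det_updateRow_updateRow_swap _ hjj', neg_neg]
    _ = (L.updateRow j' v).det := by rw [updateRow_eq_self]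

theorem adjugate_apply_eq_of_sum_rows_eq_zero {L : Matrix n n R} (h : ∑ k, L k = 0)
    (i j j' : n) : L.adjugate i j = L.adjugate i j' := by
  simp only [adjugate_apply]
  exact det_updateRow_eq_of_sum_rows_eq_zero h _ j j'

theorem exists_adjugate_apply_eq_and_mulVec_eq_zero {L : Matrix n n R} (h : ∑ k, L k = 0) :
    ∃ ρ : n → R, (∀ i j, L.adjugate i j = ρ i) ∧ L *ᵥ ρ = 0 := by
  cases isEmpty_or_nonempty n with
  | inl _ => exact ⟨0, fun i => isEmptyElim i, Subsingleton.elim _ _⟩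
  | inr _ =>
    let j₀ : n := Classical.arbitrary n
    refine ⟨fun i => L.adjugate i j₀,
      fun i j => adjugate_apply_eq_of_sum_rows_eq_zero h i j j₀, ?_⟩
    ext i
    have hcol := congrFun₂ (mul_adjugate L) i j₀
    rw [det_eq_zero_of_sum_rows_eq_zero h, zero_smul] at hcol
    simpa [mul_apply, mulVec, dotProduct] using hcol

end Matrix

theorem stmt_3_general (c : ℕ) (L : Matrix (Fin c) (Fin c) ℝ)
    (hcol : ∀ j, ∑ i, L i j = 0) :
    ∃ ρ : Fin c → ℝ, (∀ i j, L.adjugate i j = ρ i) ∧ L.mulVec ρ = 0 :=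
  exists_adjugate_apply_eq_and_mulVec_eq_zero <|
    funext fun j => (Finset.sum_apply j _ _).trans (hcol j)

/-- Kirchhoff / Matrix Tree construction: if all column sums of the `c × c` real matrix `L`
are zero, then all columns of the adjugate of `L` coincide, i.e. `adj(L) = ρ 𝟙ᵀ` for some
vector `ρ`, and this common column satisfies `L ρ = 0`. -/
theorem stmt_3 (c : ℕ) (hc : 1 ≤ c) (L : Matrix (Fin c) (Fin c) ℝ)
    (hcol : ∀ j, ∑ i, L i j = 0) :
    ∃ ρ : Fin c → ℝ, (∀ i j, L.adjugate i j = ρ i) ∧ L.mulVec ρ = 0 :=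
  stmt_3_general c L hcol
end

section
/- Let L be a real c×c matrix whose off-diagonal entries are nonpositive and all of whose column sums are zero (𝟙ᵀL = 0). Define a directed edge from vertex i to vertex j (for i ≠ j) whenever L_{ji} ≠ 0. Then there exists a strictly positive vector ρ ∈ ℝ^c with L ρ = 0 if and only if every connected component of this directed graph is strongly connected, i.e., for all vertices i, j: if j is reachable from i in the underlying undirected graph, then j is reachable from i along directed edges. -/
/-!
Call a set of vertices closed if no edge leaves it. If `ρ > 0` and `L ρ = 0`, then for a closed
set `S` the vector `𝟙_Sᵀ L` is nonpositive, and pairing it with `ρ` gives `𝟙_Sᵀ L ρ = 0`; hence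
it vanishes, which says that no edge enters `S` either. Applied to the set reachable from `i`, this
gives the strong connectedness of the components.

Conversely, the support of a nonnegative kernel vector is closed. Every nonempty closed set `S`
carries such a vector: the principal submatrix on `S` still has zero column sums, so it is
singular, and for a kernel vector `u` of it, `|u|` satisfies `L |u| ≤ 0` and `𝟙ᵀ L |u| = 0`, so
`|u|` is again in the kernel. For `S` the set reachable from `i`, strong connectedness of the
components brings `i` back into the support; summing these vectors over `i` gives `ρ`.
-/

open Matrix Relation

variable {ι : Type*} {L : Matrix ι ι ℝ}

/-- No edge of the graph of `L` leaves `S`; there is an edge `j → k` when `L k j ≠ 0`. -/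
def IsEdgeClosed (L : Matrix ι ι ℝ) (S : Set ι) : Prop :=
  ∀ ⦃j k⦄, j ∈ S → L k j ≠ 0 → k ∈ S

theorem IsEdgeClosed.apply_eq_zero {S : Set ι} (hS : IsEdgeClosed L S) {j k : ι}
    (hj : j ∈ S) (hk : k ∉ S) : L k j = 0 :=
  not_not.1 fun h => hk (hS hj h)

theorem IsEdgeClosed.mem_of_reflTransGen {S : Set ι} (hS : IsEdgeClosed L S) {i j : ι}
    (hi : i ∈ S) (h : ReflTransGen (fun a b => a ≠ b ∧ L b a ≠ 0) i j) : j ∈ S := by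
  induction h with
  | refl => exact hi
  | tail _ hedge ih => exact hS ih hedge.2

theorem mem_of_reflTransGen_of_isEdgeClosed_compl {S : Set ι} (hS : IsEdgeClosed L S)
    (hSc : IsEdgeClosed L Sᶜ) {i j : ι} (hi : i ∈ S)
    (h : ReflTransGen (fun a b => a ≠ b ∧ (L b a ≠ 0 ∨ L a b ≠ 0)) i j) : j ∈ S := by
  induction h with
  | refl => exact hi
  | tail _ hedge ih =>
    rcases hedge.2 with hba | hab
    · exact hS ih hba
    · by_contra hb
      exact hSc hb hab ih

theorem isEdgeClosed_setOf_reflTransGen (i : ι) :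
    IsEdgeClosed L {k | ReflTransGen (fun a b => a ≠ b ∧ L b a ≠ 0) i k} := by
  intro j k hj hkj
  by_cases hjk : j = k
  · exact hjk ▸ hj
  · exact ReflTransGen.tail hj ⟨hjk, hkj⟩

theorem indicator_one_mul_nonpos (hoff : ∀ i j, i ≠ j → L i j ≤ 0) {S : Set ι} {m : ι}
    (hm : m ∉ S) (k : ι) : S.indicator 1 k * L k m ≤ 0 := by
  by_cases hk : k ∈ S
  · simpa [hk] using hoff k m (ne_of_mem_of_not_mem hk hm)
  · simp [hk]

theorem extend_subtype_val_apply_of_not {α γ : Type*} {p : α → Prop} {a : α} (ha : ¬p a)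
    (g : Subtype p → γ) (e : α → γ) : Function.extend Subtype.val g e a = e a :=
  Function.extend_apply' _ _ _ fun ⟨b, hb⟩ => ha (hb ▸ b.2)

variable [Fintype ι]

theorem mulVec_abs_apply_le_of_nonneg (hoff : ∀ i j, i ≠ j → L i j ≤ 0) (u : ι → ℝ) {k : ι}
    (hk : 0 ≤ u k) : (L *ᵥ fun j => |u j|) k ≤ (L *ᵥ u) k := by
  refine Finset.sum_le_sum fun j _ => ?_
  rcases eq_or_ne k j with rfl | hkj
  · exact le_of_eq (congrArg (L k k * ·) (abs_of_nonneg hk))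
  · exact mul_le_mul_of_nonpos_left (le_abs_self _) (hoff k j hkj)

theorem mulVec_abs_nonpos (hoff : ∀ i j, i ≠ j → L i j ≤ 0) {u : ι → ℝ} (hu : L *ᵥ u = 0) :
    (L *ᵥ fun j => |u j|) ≤ 0 := by
  intro k
  rcases le_total 0 (u k) with hk | hk
  · simpa [hu] using mulVec_abs_apply_le_of_nonneg hoff u hk
  · simpa [mulVec_neg, hu] using mulVec_abs_apply_le_of_nonneg hoff (-u) (neg_nonneg.2 hk)

theorem mulVec_eq_zero_of_nonpos (hcol : ∀ j, ∑ i, L i j = 0) {w : ι → ℝ}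
    (hw : L *ᵥ w ≤ 0) : L *ᵥ w = 0 := by
  have hsum : ∑ k, (L *ᵥ w) k = 0 := by
    have h1 : (1 : ι → ℝ) ᵥ* L = 0 := funext fun j => by simp [vecMul, dotProduct, hcol]
    simpa [dotProduct, h1] using dotProduct_mulVec (1 : ι → ℝ) L w
  funext k
  exact (Finset.sum_eq_zero_iff_of_nonpos fun k _ => hw k).1 hsum k (Finset.mem_univ k)

theorem exists_nonneg_ne_zero_mulVec_eq_zero [Nonempty ι] (hoff : ∀ i j, i ≠ j → L i j ≤ 0)
    (hcol : ∀ j, ∑ i, L i j = 0) : ∃ v : ι → ℝ, v ≠ 0 ∧ 0 ≤ v ∧ L *ᵥ v = 0 := by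
  classical
  have hdet : L.det = 0 :=
    exists_vecMul_eq_zero_iff.1 ⟨1, one_ne_zero, funext fun j => by simp [vecMul, dotProduct, hcol]⟩
  obtain ⟨u, hu0, hu⟩ := exists_mulVec_eq_zero_iff.2 hdet
  refine ⟨fun j => |u j|, fun h => hu0 (funext fun j => abs_eq_zero.1 (congrFun h j)),
    fun j => abs_nonneg (u j), mulVec_eq_zero_of_nonpos hcol (mulVec_abs_nonpos hoff hu)⟩

theorem isEdgeClosed_support (hoff : ∀ i j, i ≠ j → L i j ≤ 0) {v : ι → ℝ} (hv : 0 ≤ v)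
    (hker : L *ᵥ v = 0) : IsEdgeClosed L (Function.support v) := by
  intro j k hj hkj
  by_contra hk
  have hterm : ∀ m ∈ Finset.univ, L k m * v m ≤ 0 := fun m _ => by
    rcases eq_or_ne k m with rfl | hkm
    · simp [Function.notMem_support.1 hk]
    · exact mul_nonpos_of_nonpos_of_nonneg (hoff k m hkm) (hv m)
  have hzero := (Finset.sum_eq_zero_iff_of_nonpos hterm).1 (congrFun hker k) j (Finset.mem_univ j)
  exact (mul_ne_zero hkj hj) hzero

theorem IsEdgeClosed.indicator_vecMul_nonpos (hoff : ∀ i j, i ≠ j → L i j ≤ 0)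
    (hcol : ∀ j, ∑ i, L i j = 0) {S : Set ι} (hS : IsEdgeClosed L S) :
    S.indicator 1 ᵥ* L ≤ 0 := by
  intro m
  by_cases hm : m ∈ S
  · refine le_of_eq ((Finset.sum_congr rfl fun k _ => ?_).trans (hcol m))
    by_cases hk : k ∈ S
    · simp [hk]
    · simp [hk, hS.apply_eq_zero hm hk]
  · exact Finset.sum_nonpos fun k _ => indicator_one_mul_nonpos hoff hm k

theorem IsEdgeClosed.compl_of_pos_of_mulVec_eq_zero (hoff : ∀ i j, i ≠ j → L i j ≤ 0)
    (hcol : ∀ j, ∑ i, L i j = 0) {ρ : ι → ℝ} (hρ : ∀ i, 0 < ρ i) (hker : L *ᵥ ρ = 0)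
    {S : Set ι} (hS : IsEdgeClosed L S) : IsEdgeClosed L Sᶜ := by
  intro m k hm hkm
  by_contra hk
  have hterm (j : ι) : (S.indicator 1 ᵥ* L) j * ρ j ≤ 0 :=
    mul_nonpos_of_nonpos_of_nonneg (hS.indicator_vecMul_nonpos hoff hcol j) (hρ j).le
  have hdot : ∑ j, (S.indicator 1 ᵥ* L) j * ρ j = 0 := by
    simpa [dotProduct, hker] using (dotProduct_mulVec (S.indicator 1) L ρ).symm
  have hcolS : (S.indicator 1 ᵥ* L) m = 0 :=
    (mul_eq_zero.1 ((Finset.sum_eq_zero_iff_of_nonpos fun j _ => hterm j).1 hdot m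
      (Finset.mem_univ m))).resolve_right (hρ m).ne'
  have := (Finset.sum_eq_zero_iff_of_nonpos fun i _ => indicator_one_mul_nonpos hoff hm i).1
    hcolS k (Finset.mem_univ k)
  simp only [Set.indicator_of_mem (not_not.1 hk), Pi.one_apply, one_mul] at this
  exact hkm this

theorem IsEdgeClosed.sum_submatrix_eq_zero (hcol : ∀ j, ∑ i, L i j = 0) {S : Set ι}
    [DecidablePred (· ∈ S)] (hS : IsEdgeClosed L S) (j : S) :
    ∑ i : S, L.submatrix (Subtype.val : S → ι) Subtype.val i j = 0 := by
  change ∑ i : S, L i j = 0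
  rw [← hcol j, ← Fintype.sum_subtype_add_sum_subtype (· ∈ S), left_eq_add]
  exact Finset.sum_eq_zero fun i _ => hS.apply_eq_zero j.2 i.2

theorem IsEdgeClosed.mulVec_extend_eq_zero {S : Set ι} [DecidablePred (· ∈ S)]
    (hS : IsEdgeClosed L S) {u : S → ℝ}
    (hu : L.submatrix (Subtype.val : S → ι) Subtype.val *ᵥ u = 0) :
    L *ᵥ Function.extend Subtype.val u 0 = 0 := by
  funext k
  rw [mulVec, dotProduct, ← Fintype.sum_subtype_add_sum_subtype (· ∈ S)]
  have hout : ∑ j : {j // j ∉ S}, L k j * Function.extend Subtype.val u 0 (j : ι) = 0 :=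
    Finset.sum_eq_zero fun j _ => by
      rw [extend_subtype_val_apply_of_not j.2, Pi.zero_apply, mul_zero]
  simp only [Subtype.val_injective.extend_apply, hout, add_zero]
  by_cases hk : k ∈ S
  · simpa [mulVec, dotProduct] using congrFun hu ⟨k, hk⟩
  · exact Finset.sum_eq_zero fun j _ => by rw [hS.apply_eq_zero j.2 hk, zero_mul]

theorem IsEdgeClosed.exists_nonneg_mulVec_eq_zero (hoff : ∀ i j, i ≠ j → L i j ≤ 0)
    (hcol : ∀ j, ∑ i, L i j = 0) {S : Set ι} (hS : IsEdgeClosed L S) (hne : S.Nonempty) :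
    ∃ v : ι → ℝ, v ≠ 0 ∧ 0 ≤ v ∧ L *ᵥ v = 0 ∧ Function.support v ⊆ S := by
  classical
  have : Nonempty S := hne.to_subtype
  obtain ⟨u, hu0, hu_nonneg, hu⟩ :=
    exists_nonneg_ne_zero_mulVec_eq_zero (L := L.submatrix (Subtype.val : S → ι) Subtype.val)
      (fun i j hij => hoff i j (Subtype.coe_ne_coe.2 hij)) (hS.sum_submatrix_eq_zero hcol)
  have hv_in (j : S) : Function.extend Subtype.val u (0 : ι → ℝ) j = u j :=
    Subtype.val_injective.extend_apply _ _ _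
  refine ⟨Function.extend Subtype.val u 0, fun h => hu0 (funext fun j => ?_), fun j => ?_,
    hS.mulVec_extend_eq_zero hu, fun j hj => not_not.1 fun hjS => hj ?_⟩
  · simpa [hv_in] using congrFun h j
  · by_cases hj : j ∈ S
    · simpa [hv_in ⟨j, hj⟩] using hu_nonneg ⟨j, hj⟩
    · simp [extend_subtype_val_apply_of_not hj]
  · simp [extend_subtype_val_apply_of_not hjS]

theorem reflTransGen_of_pos_of_mulVec_eq_zero (hoff : ∀ i j, i ≠ j → L i j ≤ 0)
    (hcol : ∀ j, ∑ i, L i j = 0) {ρ : ι → ℝ} (hρ : ∀ i, 0 < ρ i) (hker : L *ᵥ ρ = 0) {i j : ι}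
    (h : ReflTransGen (fun a b => a ≠ b ∧ (L b a ≠ 0 ∨ L a b ≠ 0)) i j) :
    ReflTransGen (fun a b => a ≠ b ∧ L b a ≠ 0) i j :=
  have hR := isEdgeClosed_setOf_reflTransGen (L := L) i
  mem_of_reflTransGen_of_isEdgeClosed_compl hR
    (hR.compl_of_pos_of_mulVec_eq_zero hoff hcol hρ hker) ReflTransGen.refl h

theorem exists_nonneg_mulVec_eq_zero_pos_apply (hoff : ∀ i j, i ≠ j → L i j ≤ 0)
    (hcol : ∀ j, ∑ i, L i j = 0)
    (hrev : ∀ i j, ReflTransGen (fun a b => a ≠ b ∧ (L b a ≠ 0 ∨ L a b ≠ 0)) i j →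
      ReflTransGen (fun a b => a ≠ b ∧ L b a ≠ 0) i j) (i : ι) :
    ∃ v : ι → ℝ, 0 ≤ v ∧ L *ᵥ v = 0 ∧ 0 < v i := by
  obtain ⟨v, hv0, hv, hker, hsupp⟩ := (isEdgeClosed_setOf_reflTransGen (L := L) i)
    |>.exists_nonneg_mulVec_eq_zero hoff hcol ⟨i, ReflTransGen.refl⟩
  obtain ⟨s, hs⟩ := Function.ne_iff.1 hv0
  have hsi : ReflTransGen (fun a b => a ≠ b ∧ (L b a ≠ 0 ∨ L a b ≠ 0)) s i :=
    ReflTransGen.mono (fun _ _ hab => ⟨hab.1.symm, Or.inr hab.2⟩) _ _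
      (reflTransGen_swap.2 (hsupp hs))
  have hi : v i ≠ 0 := (isEdgeClosed_support hoff hv hker).mem_of_reflTransGen hs (hrev s i hsi)
  exact ⟨v, hv, hker, (hv i).lt_of_ne' hi⟩

theorem exists_pos_mulVec_eq_zero (hoff : ∀ i j, i ≠ j → L i j ≤ 0)
    (hcol : ∀ j, ∑ i, L i j = 0)
    (hrev : ∀ i j, ReflTransGen (fun a b => a ≠ b ∧ (L b a ≠ 0 ∨ L a b ≠ 0)) i j →
      ReflTransGen (fun a b => a ≠ b ∧ L b a ≠ 0) i j) :
    ∃ ρ : ι → ℝ, (∀ i, 0 < ρ i) ∧ L *ᵥ ρ = 0 := by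
  choose v hv0 hker hpos using exists_nonneg_mulVec_eq_zero_pos_apply hoff hcol hrev
  refine ⟨∑ i, v i, fun k => ?_, by simp [mulVec_sum, hker]⟩
  rw [Finset.sum_apply]
  exact (hpos k).trans_le (Finset.single_le_sum (fun i _ => hv0 i k) (Finset.mem_univ k))

/-- A real `c × c` matrix `L` with nonpositive off-diagonal entries and zero column sums
(out-degree Laplacian, with a directed edge `i → j` whenever `L j i ≠ 0`, `i ≠ j`) has a
strictly positive kernel vector iff every connected component of the directed graph is
strongly connected: whenever `j` is reachable from `i` in the underlying undirected graph,
`j` is reachable from `i` along directed edges. -/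
theorem stmt_4 (c : ℕ) (L : Matrix (Fin c) (Fin c) ℝ)
    (hoff : ∀ i j, i ≠ j → L i j ≤ 0)
    (hcol : ∀ j, ∑ i, L i j = 0) :
    (∃ ρ : Fin c → ℝ, (∀ i, 0 < ρ i) ∧ L.mulVec ρ = 0) ↔
    (∀ i j : Fin c,
      Relation.ReflTransGen (fun a b => a ≠ b ∧ (L b a ≠ 0 ∨ L a b ≠ 0)) i j →
      Relation.ReflTransGen (fun a b => a ≠ b ∧ L b a ≠ 0) i j) :=
  ⟨fun ⟨_, hρ, hker⟩ _ _ => reflTransGen_of_pos_of_mulVec_eq_zero hoff hcol hρ hker,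
    exists_pos_mulVec_eq_zero hoff hcol⟩
end

section
/- Let L be a real c×c matrix, let Z be a real m×c matrix, and suppose ρ ∈ ℝ^c is a strictly positive vector such that L ρ = 0 and the kernel of L equals the span of ρ. Then there exists a strictly positive vector x* ∈ ℝ^m with L Exp(Zᵀ Ln x*) = 0 if and only if Ln ρ belongs to the subspace im(Zᵀ) + span{𝟙_c}. -/
open Matrix

/-! A vector `w > 0` lies in `ker L = span{ρ}` iff `w = t ρ` with `t > 0`, i.e. iff
`Ln w - Ln ρ ∈ span{𝟙}`. Taking `w = Exp(Zᵀ v)` with `v = Ln x*` ranging over all of `ℝ^m`,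
an equilibrium exists iff `Zᵀ v - Ln ρ ∈ span{𝟙}` for some `v`, i.e. iff
`Ln ρ ∈ im Zᵀ + span{𝟙}`. -/

theorem Submodule.mem_sup_iff_exists_sub_mem {R M : Type*} [Ring R] [AddCommGroup M]
    [Module R M] {p q : Submodule R M} {x : M} :
    x ∈ p ⊔ q ↔ ∃ y ∈ p, y - x ∈ q := by
  rw [Submodule.mem_sup]
  constructor
  · rintro ⟨y, hy, z, hz, rfl⟩
    exact ⟨y, hy, by simpa using q.neg_mem hz⟩
  · rintro ⟨y, hy, hyx⟩
    exact ⟨y, hy, x - y, by simpa using q.neg_mem hyx, add_sub_cancel y x⟩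

theorem exists_pos_and_log_iff {ι : Type*} {p : (ι → ℝ) → Prop} :
    (∃ x : ι → ℝ, (∀ i, 0 < x i) ∧ p (fun i => Real.log (x i))) ↔ ∃ v, p v := by
  constructor
  · rintro ⟨x, -, hx⟩
    exact ⟨_, hx⟩
  · rintro ⟨v, hv⟩
    refine ⟨fun i => Real.exp (v i), fun i => Real.exp_pos _, ?_⟩
    simpa only [Real.log_exp] using hv

theorem exp_mem_span_singleton_iff {ι : Type*} {v y : ι → ℝ} (hv : ∀ i, 0 < v i) :
    (fun i => Real.exp (y i)) ∈ Submodule.span ℝ {v} ↔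
      (fun i => y i - Real.log (v i)) ∈ Submodule.span ℝ {(fun _ => 1 : ι → ℝ)} := by
  simp only [Submodule.mem_span_singleton, funext_iff, Pi.smul_apply, smul_eq_mul, mul_one]
  constructor
  · rintro ⟨t, ht⟩
    cases isEmpty_or_nonempty ι with
    | inl _ => exact ⟨0, isEmptyElim⟩
    | inr hne =>
      obtain ⟨i₀⟩ := hne
      have htpos : 0 < t := pos_of_mul_pos_left ((ht i₀).symm ▸ Real.exp_pos _) (hv i₀).le
      refine ⟨Real.log t, fun i => ?_⟩
      rw [← Real.log_exp (y i), ← ht i, Real.log_mul htpos.ne' (hv i).ne']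
      ring
  · rintro ⟨s, hs⟩
    refine ⟨Real.exp s, fun i => ?_⟩
    rw [hs i, Real.exp_sub, Real.exp_log (hv i), div_mul_cancel₀ _ (hv i).ne']

theorem stmt_6_general (m c : ℕ) (L : Matrix (Fin c) (Fin c) ℝ) (Z : Matrix (Fin m) (Fin c) ℝ)
    (ρ : Fin c → ℝ) (hρ : ∀ i, 0 < ρ i)
    (hker : LinearMap.ker L.mulVecLin = Submodule.span ℝ {ρ}) :
    (∃ xs : Fin m → ℝ, (∀ k, 0 < xs k) ∧
        L.mulVec (fun i => Real.exp (Zᵀ.mulVec (fun k => Real.log (xs k)) i)) = 0) ↔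
    (fun i => Real.log (ρ i)) ∈
      LinearMap.range Zᵀ.mulVecLin ⊔ Submodule.span ℝ {(fun _ => 1 : Fin c → ℝ)} := by
  calc (∃ xs : Fin m → ℝ, (∀ k, 0 < xs k) ∧
        L.mulVec (fun i => Real.exp (Zᵀ.mulVec (fun k => Real.log (xs k)) i)) = 0)
      ↔ ∃ v, L.mulVec (fun i => Real.exp (Zᵀ.mulVec v i)) = 0 :=
        exists_pos_and_log_iff (p := fun v => L.mulVec (fun i => Real.exp (Zᵀ.mulVec v i)) = 0)
    _ ↔ ∃ v, (fun i => Real.exp (Zᵀ.mulVec v i)) ∈ LinearMap.ker L.mulVecLin := by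
        simp only [LinearMap.mem_ker, mulVecLin_apply]
    _ ↔ ∃ v, (fun i => Zᵀ.mulVec v i - Real.log (ρ i)) ∈
          Submodule.span ℝ {(fun _ => 1 : Fin c → ℝ)} := by
        simp only [hker, exp_mem_span_singleton_iff hρ]
    _ ↔ _ := by
        simp only [Submodule.mem_sup_iff_exists_sub_mem, LinearMap.mem_range, mulVecLin_apply,
          exists_exists_eq_and, ← Pi.sub_def]

/-- (Theorem 2 for a connected graph of complexes.) Let `ρ > 0` span the kernel of the
Laplacian `L` with `Lρ = 0`. Then a complex-balanced equilibrium `x* > 0` with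
`L Exp(Zᵀ Ln x*) = 0` exists iff `Ln ρ ∈ im Zᵀ + span{𝟙}`. -/
theorem stmt_6 (m c : ℕ) (L : Matrix (Fin c) (Fin c) ℝ) (Z : Matrix (Fin m) (Fin c) ℝ)
    (ρ : Fin c → ℝ) (hρ : ∀ i, 0 < ρ i) (hLρ : L.mulVec ρ = 0)
    (hker : LinearMap.ker L.mulVecLin = Submodule.span ℝ {ρ}) :
    (∃ xs : Fin m → ℝ, (∀ k, 0 < xs k) ∧
        L.mulVec (fun i => Real.exp (Zᵀ.mulVec (fun k => Real.log (xs k)) i)) = 0) ↔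
    (fun i => Real.log (ρ i)) ∈
      LinearMap.range Zᵀ.mulVecLin ⊔ Submodule.span ℝ {(fun _ => 1 : Fin c → ℝ)} :=
  stmt_6_general m c L Z ρ hρ hker
end

section
/- In the setting of the previous statement (Z m×c nonnegative, Z_e = [Z 0], 𝓛_e a (c+1)×(c+1) matrix with nonpositive off-diagonal entries and zero row and column sums, x* > 0), assume additionally that the extended graph of complexes is connected, i.e. the graph on vertices {1,…,c+1} with an undirected edge between distinct i and j whenever (𝓛_e)_{ij} ≠ 0 or (𝓛_e)_{ji} ≠ 0 is connected. Then a strictly positive x** is a steady state (Z_e 𝓛_e Exp(Z_eᵀ Ln(x**/x*)) = 0) if and only if Zᵀ Ln x** = Zᵀ Ln x*. If moreover the linear map defined by Z (from ℝ^c to ℝ^m) is surjective, then x* is the unique positive steady state. -/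
/-!
Write `w = Z_eᵀ Ln(x/x*)`. Pairing the steady-state equation with `Ln(x/x*)` gives
`0 = wᵀ 𝓛_e Exp w = ∑_{i,j} (-𝓛_e)_{ij} (e^{w_i} - e^{w_j} (w_i - w_j + 1))`, using the zero
row and column sums; by convexity of `exp` every summand is nonnegative and vanishes on an edge only
if `w_i = w_j`. Connectedness makes `w` constant, and the zero complex forces the constant to be
`0`, i.e. `Zᵀ Ln x = Zᵀ Ln x*`. Conversely a constant `w` is killed by the zero row sums.
Surjectivity of `Z` makes `Zᵀ` injective, and `Ln` is injective on positive vectors.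
-/

open Matrix Finset

namespace Real

theorem exp_mul_sub_add_one_le_exp (s t : ℝ) : exp t * (s - t + 1) ≤ exp s := by
  calc exp t * (s - t + 1) ≤ exp t * exp (s - t) := by gcongr; exact add_one_le_exp _
    _ = exp s := by rw [← exp_add, add_sub_cancel]

theorem exp_mul_sub_add_one_lt_exp {s t : ℝ} (h : s ≠ t) : exp t * (s - t + 1) < exp s := by
  calc exp t * (s - t + 1) < exp t * exp (s - t) := by
        gcongr; exact add_one_lt_exp (sub_ne_zero.2 h)
    _ = exp s := by rw [← exp_add, add_sub_cancel]

end Real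

open Real

theorem Matrix.vecMul_injective_of_surjective_mulVecLin {m n R : Type*} [Fintype m]
    [Fintype n] [CommSemiring R] {A : Matrix m n R}
    (hA : Function.Surjective A.mulVecLin) :
    Function.Injective fun v : m → R => v ᵥ* A := by
  classical
  intro u v huv
  funext k
  obtain ⟨y, hy⟩ := hA (Pi.single k 1)
  rw [mulVecLin_apply] at hy
  rw [← dotProduct_single_one u, ← dotProduct_single_one v, ← hy, dotProduct_mulVec,
    dotProduct_mulVec]
  exact congrArg (· ⬝ᵥ y) huv

section Laplacian

variable {ι : Type*} [Fintype ι]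

theorem dotProduct_mulVec_exp_eq_sum (L : Matrix ι ι ℝ) (hrow : ∀ i, ∑ j, L i j = 0)
    (hcol : ∀ j, ∑ i, L i j = 0) (w : ι → ℝ) :
    w ⬝ᵥ (L *ᵥ fun j => exp (w j)) =
      ∑ i, ∑ j, -L i j * (exp (w i) - exp (w j) * (w i - w j + 1)) := by
  have hrow' : ∑ i, ∑ j, L i j * exp (w i) = 0 := by
    simp [← sum_mul, hrow]
  have hcol' : ∑ i, ∑ j, L i j * (exp (w j) * (w j - 1)) = 0 := by
    rw [sum_comm]; simp [← sum_mul, hcol]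
  calc w ⬝ᵥ (L *ᵥ fun j => exp (w j))
      = ∑ i, ∑ j, w i * (L i j * exp (w j)) := by simp only [dotProduct, mulVec, mul_sum]
    _ = ∑ i, ∑ j, -L i j * (exp (w i) - exp (w j) * (w i - w j + 1)) +
          (∑ i, ∑ j, L i j * exp (w i) + ∑ i, ∑ j, L i j * (exp (w j) * (w j - 1))) := by
      rw [← sum_add_distrib, ← sum_add_distrib]
      refine sum_congr rfl fun i _ => ?_
      rw [← sum_add_distrib, ← sum_add_distrib]
      exact sum_congr rfl fun j _ => by ring
    _ = _ := by rw [hrow', hcol', add_zero, add_zero]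

theorem eq_of_dotProduct_mulVec_exp_eq_zero (L : Matrix ι ι ℝ)
    (hoff : ∀ i j, i ≠ j → L i j ≤ 0) (hrow : ∀ i, ∑ j, L i j = 0)
    (hcol : ∀ j, ∑ i, L i j = 0) {w : ι → ℝ} (hw : w ⬝ᵥ (L *ᵥ fun j => exp (w j)) = 0)
    {i j : ι} (hij : L i j ≠ 0) : w i = w j := by
  set f : ι → ι → ℝ := fun i j => -L i j * (exp (w i) - exp (w j) * (w i - w j + 1))
  have hf : ∀ i j, 0 ≤ f i j := by
    intro i j
    rcases eq_or_ne i j with rfl | hne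
    · simp [f]
    · exact mul_nonneg (neg_nonneg.2 (hoff i j hne))
        (sub_nonneg.2 (exp_mul_sub_add_one_le_exp _ _))
  have hfij : f i j = 0 := by
    rw [dotProduct_mulVec_exp_eq_sum L hrow hcol] at hw
    have hrow_zero := (Fintype.sum_eq_zero_iff_of_nonneg fun i => sum_nonneg fun j _ => hf i j).1 hw
    exact congrFun ((Fintype.sum_eq_zero_iff_of_nonneg (hf i)).1 (congrFun hrow_zero i)) j
  by_contra hne
  have hlt : L i j < 0 := (hoff i j fun h => hne (congrArg w h)).lt_of_ne hij
  have := mul_pos (neg_pos.2 hlt) (sub_pos.2 (exp_mul_sub_add_one_lt_exp hne))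
  exact this.ne' hfij

theorem mulVec_mulVec_exp_transpose_mulVec_eq_zero_iff {κ : Type*} [Fintype κ]
    (Y : Matrix κ ι ℝ) (L : Matrix ι ι ℝ) (hoff : ∀ i j, i ≠ j → L i j ≤ 0)
    (hrow : ∀ i, ∑ j, L i j = 0) (hcol : ∀ j, ∑ i, L i j = 0)
    (hconn : ∀ i j : ι,
      Relation.ReflTransGen (fun a b => a ≠ b ∧ (L a b ≠ 0 ∨ L b a ≠ 0)) i j)
    (v : κ → ℝ) :
    Y *ᵥ (L *ᵥ fun i => exp ((Yᵀ *ᵥ v) i)) = 0 ↔ ∀ i j, (Yᵀ *ᵥ v) i = (Yᵀ *ᵥ v) j := by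
  set w := Yᵀ *ᵥ v
  constructor
  · intro h i j
    have hw : w ⬝ᵥ (L *ᵥ fun j => exp (w j)) = 0 := by
      rw [← dotProduct_zero v, ← h, dotProduct_mulVec v Y, ← mulVec_transpose]
    have hedge : ∀ a b, L a b ≠ 0 → w a = w b := fun a b =>
      eq_of_dotProduct_mulVec_exp_eq_zero L hoff hrow hcol hw
    induction hconn i j with
    | refl => rfl
    | tail _ hbc ih => exact ih.trans (hbc.2.elim (hedge _ _) fun h => (hedge _ _ h).symm)
  · intro h
    have : (L *ᵥ fun j => exp (w j)) = 0 := by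
      funext i
      simp only [mulVec, dotProduct, h _ i, ← sum_mul, hrow, zero_mul, Pi.zero_apply]
    rw [this, mulVec_zero]

end Laplacian

theorem forall_transpose_mulVec_eq_iff {m c : ℕ} {Z : Matrix (Fin m) (Fin c) ℝ}
    {Ze : Matrix (Fin m) (Fin (c + 1)) ℝ} (hZe1 : ∀ k i, Ze k (Fin.castSucc i) = Z k i)
    (hZe2 : ∀ k, Ze k (Fin.last c) = 0) (v : Fin m → ℝ) :
    (∀ i j, (Zeᵀ *ᵥ v) i = (Zeᵀ *ᵥ v) j) ↔ Zᵀ *ᵥ v = 0 := by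
  have hcast : ∀ i, (Zeᵀ *ᵥ v) i.castSucc = (Zᵀ *ᵥ v) i := fun i => by
    simp only [mulVec, dotProduct, transpose_apply, hZe1]
  have hlast : (Zeᵀ *ᵥ v) (Fin.last c) = 0 := by
    simp only [mulVec, dotProduct, transpose_apply, hZe2, zero_mul, sum_const_zero]
  constructor
  · intro h
    funext i
    rw [← hcast, h _ (Fin.last c), hlast, Pi.zero_apply]
  · intro h
    have hzero : ∀ i, (Zeᵀ *ᵥ v) i = 0 :=
      Fin.lastCases hlast fun i => by rw [hcast, h, Pi.zero_apply]
    intro i j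
    rw [hzero, hzero]

theorem stmt_11_general (m c : ℕ) (Z : Matrix (Fin m) (Fin c) ℝ)
    (Ze : Matrix (Fin m) (Fin (c + 1)) ℝ)
    (hZe1 : ∀ (k : Fin m) (i : Fin c), Ze k i.castSucc = Z k i)
    (hZe2 : ∀ k : Fin m, Ze k (Fin.last c) = 0)
    (Le : Matrix (Fin (c + 1)) (Fin (c + 1)) ℝ)
    (hoff : ∀ i j, i ≠ j → Le i j ≤ 0)
    (hrow : ∀ i, ∑ j, Le i j = 0)
    (hcol : ∀ j, ∑ i, Le i j = 0)
    (xs : Fin m → ℝ) (hxs : ∀ k, 0 < xs k)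
    (hconn : ∀ i j : Fin (c + 1),
      Relation.ReflTransGen (fun a b => a ≠ b ∧ (Le a b ≠ 0 ∨ Le b a ≠ 0)) i j) :
    (∀ x : Fin m → ℝ, (∀ k, 0 < x k) →
      (Ze.mulVec (Le.mulVec (fun i =>
          Real.exp (Zeᵀ.mulVec (fun k => Real.log (x k / xs k)) i))) = 0
        ↔ Zᵀ.mulVec (fun k => Real.log (x k)) = Zᵀ.mulVec (fun k => Real.log (xs k)))) ∧
    (Function.Surjective Z.mulVecLin →
      (Ze.mulVec (Le.mulVec (fun i =>
          Real.exp (Zeᵀ.mulVec (fun k => Real.log (xs k / xs k)) i))) = 0) ∧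
      (∀ x : Fin m → ℝ, (∀ k, 0 < x k) →
        Ze.mulVec (Le.mulVec (fun i =>
          Real.exp (Zeᵀ.mulVec (fun k => Real.log (x k / xs k)) i))) = 0 →
        x = xs)) := by
  have steady_iff : ∀ x : Fin m → ℝ, (∀ k, 0 < x k) →
      (Ze *ᵥ (Le *ᵥ fun i => exp ((Zeᵀ *ᵥ fun k => log (x k / xs k)) i)) = 0 ↔
        Zᵀ *ᵥ (fun k => log (x k)) = Zᵀ *ᵥ fun k => log (xs k)) := by
    intro x hx
    have hlog : (fun k => log (x k / xs k)) = (fun k => log (x k)) - fun k => log (xs k) :=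
      funext fun k => log_div (hx k).ne' (hxs k).ne'
    rw [mulVec_mulVec_exp_transpose_mulVec_eq_zero_iff Ze Le hoff hrow hcol hconn,
      forall_transpose_mulVec_eq_iff hZe1 hZe2, hlog, mulVec_sub, sub_eq_zero]
  refine ⟨steady_iff, fun hsurj => ⟨(steady_iff xs hxs).2 rfl, fun x hx hsteady => ?_⟩⟩
  have hlog : (fun k => log (x k)) = fun k => log (xs k) := by
    apply vecMul_injective_of_surjective_mulVecLin hsurj
    simpa only [mulVec_transpose] using (steady_iff x hx).1 hsteady
  funext k
  exact log_injOn_pos (hx k) (hxs k) (congrFun hlog k)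

/-- (Theorem 4, part (2).) If the extended graph of complexes is connected, a positive
`x**` is a steady state iff `Zᵀ Ln x** = Zᵀ Ln x*`; if moreover `Z` is surjective,
`x*` is the unique positive steady state. -/
theorem stmt_11 (m c : ℕ) (Z : Matrix (Fin m) (Fin c) ℝ) (hZ : ∀ k i, 0 ≤ Z k i)
    (Ze : Matrix (Fin m) (Fin (c + 1)) ℝ)
    (hZe1 : ∀ (k : Fin m) (i : Fin c), Ze k i.castSucc = Z k i)
    (hZe2 : ∀ k : Fin m, Ze k (Fin.last c) = 0)
    (Le : Matrix (Fin (c + 1)) (Fin (c + 1)) ℝ)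
    (hoff : ∀ i j, i ≠ j → Le i j ≤ 0)
    (hrow : ∀ i, ∑ j, Le i j = 0)
    (hcol : ∀ j, ∑ i, Le i j = 0)
    (xs : Fin m → ℝ) (hxs : ∀ k, 0 < xs k)
    (hconn : ∀ i j : Fin (c + 1),
      Relation.ReflTransGen (fun a b => a ≠ b ∧ (Le a b ≠ 0 ∨ Le b a ≠ 0)) i j) :
    (∀ x : Fin m → ℝ, (∀ k, 0 < x k) →
      (Ze.mulVec (Le.mulVec (fun i =>
          Real.exp (Zeᵀ.mulVec (fun k => Real.log (x k / xs k)) i))) = 0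
        ↔ Zᵀ.mulVec (fun k => Real.log (x k)) = Zᵀ.mulVec (fun k => Real.log (xs k)))) ∧
    (Function.Surjective Z.mulVecLin →
      (Ze.mulVec (Le.mulVec (fun i =>
          Real.exp (Zeᵀ.mulVec (fun k => Real.log (xs k / xs k)) i))) = 0) ∧
      (∀ x : Fin m → ℝ, (∀ k, 0 < x k) →
        Ze.mulVec (Le.mulVec (fun i =>
          Real.exp (Zeᵀ.mulVec (fun k => Real.log (x k / xs k)) i))) = 0 →
        x = xs)) :=
  stmt_11_general m c Z Ze hZe1 hZe2 Le hoff hrow hcol xs hxs hconn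
end

section
/- Let S be a real m×r matrix and let x* ∈ ℝ^m and x_0 ∈ ℝ^m be strictly positive vectors. Then there exists a unique strictly positive vector x_1 ∈ ℝ^m such that Sᵀ Ln x_1 = Sᵀ Ln x* and x_1 − x_0 ∈ im(S). -/
/-!
Uniqueness: if `x` and `y` both qualify, then `x - y ∈ im S` while `Ln x - Ln y ∈ ker Sᵀ = (im S)ᗮ`,
so `∑ₖ (xₖ - yₖ) (log xₖ - log yₖ) = 0`; since `log` is strictly increasing every term is positive
unless `xₖ = yₖ`.

Existence: `G w = ∑ₖ (x*ₖ exp wₖ - x₀ₖ wₖ)` is coercive, so it attains its minimum on the subspace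
`W = (im S)ᗮ` at some `w`. The gradient `x* exp w - x₀` is then orthogonal to `W`, i.e. it lies in
`Wᗮ = im S`, and `x₁ = x* exp w` works because `Ln x₁ - Ln x* = w ∈ W`.
-/

open Matrix Filter Real

lemma tendsto_mul_exp_sub_mul_cocompact {a b : ℝ} (ha : 0 < a) (hb : 0 < b) :
    Tendsto (fun t => a * exp t - b * t) (cocompact ℝ) atTop := by
  rw [cocompact_eq_atBot_atTop, tendsto_sup]
  constructor
  · refine tendsto_atTop_mono (fun t => ?_) (tendsto_neg_atBot_atTop.const_mul_atTop hb)
    nlinarith [exp_pos t]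
  · have h : Tendsto (fun t => a * (exp t / t) - b) atTop atTop := by
      simpa [sub_eq_add_neg] using tendsto_atTop_add_const_right _ (-b)
        ((tendsto_exp_div_pow_atTop 1).const_mul_atTop ha)
    refine (tendsto_id.atTop_mul_atTop₀ h).congr' ?_
    filter_upwards [eventually_gt_atTop 0] with t ht
    simp only [id]
    field_simp

lemma tendsto_sum_comp_eval_cocompact {ι : Type*} [Fintype ι] {X : ι → Type*}
    [∀ i, TopologicalSpace (X i)] {g : ∀ i, X i → ℝ}
    (hg : ∀ i, Tendsto (g i) (cocompact (X i)) atTop) (hbdd : ∀ i, BddBelow (Set.range (g i))) :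
    Tendsto (fun w : ∀ i, X i => ∑ i, g i (w i)) (cocompact (∀ i, X i)) atTop := by
  choose c hc using hbdd
  rw [← coprodᵢ_cocompact, Filter.coprodᵢ, tendsto_iSup]
  intro i
  have hle (w : ∀ i, X i) : g i (w i) + (∑ j, c j - c i) ≤ ∑ j, g j (w j) := by
    have := Finset.single_le_sum (fun j _ => sub_nonneg.2 (hc j ⟨w j, rfl⟩)) (Finset.mem_univ i)
    rw [Finset.sum_sub_distrib] at this
    linarith
  exact tendsto_atTop_mono hle (tendsto_atTop_add_const_right _ _ ((hg i).comp tendsto_comap))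

lemma IsMinOn.hasDerivAt_add_smul_eq_zero {E : Type*} [AddCommGroup E] [Module ℝ E] {f : E → ℝ}
    {W : Submodule ℝ E} {x v : E} {f' : ℝ} (hmin : IsMinOn f W x) (hx : x ∈ W) (hv : v ∈ W)
    (hf : HasDerivAt (fun t : ℝ => f (x + t • v)) f' 0) : f' = 0 :=
  IsLocalMin.hasDerivAt_eq_zero
    (Eventually.of_forall fun t => by simpa using hmin (W.add_mem hx (W.smul_mem t hv))) hf

lemma sub_mul_log_sub_pos {a b : ℝ} (ha : 0 < a) (hb : 0 < b) (hab : a ≠ b) :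
    0 < (a - b) * (log a - log b) := by
  rcases hab.lt_or_gt with h | h
  · exact mul_pos_of_neg_of_neg (sub_neg.2 h) (sub_neg.2 (log_lt_log ha h))
  · exact mul_pos (sub_pos.2 h) (sub_pos.2 (log_lt_log hb h))

section DotOrthogonal

variable {ι : Type*} [Fintype ι]

abbrev dotOrthogonal (V : Submodule ℝ (ι → ℝ)) : Submodule ℝ (ι → ℝ) :=
  LinearMap.BilinForm.orthogonal (dotProductBilin ℝ ℝ) V

lemma mem_dotOrthogonal {V : Submodule ℝ (ι → ℝ)} {w : ι → ℝ} :
    w ∈ dotOrthogonal V ↔ ∀ v ∈ V, v ⬝ᵥ w = 0 :=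
  Iff.rfl

lemma dotOrthogonal_dotOrthogonal (V : Submodule ℝ (ι → ℝ)) :
    dotOrthogonal (dotOrthogonal V) = V :=
  LinearMap.BilinForm.orthogonal_orthogonal
    ⟨fun w hw => dotProduct_eq_zero w hw,
      fun w hw => dotProduct_eq_zero w fun v => by rw [dotProduct_comm]; exact hw v⟩
    (fun v w h => by rwa [dotProductBilin_apply_apply, dotProduct_comm] at h) V

lemma Matrix.transpose_mulVec_eq_zero_iff {κ : Type*} [Fintype κ] {S : Matrix ι κ ℝ}
    {u : ι → ℝ} : Sᵀ *ᵥ u = 0 ↔ u ∈ dotOrthogonal (LinearMap.range S.mulVecLin) := by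
  simp only [mem_dotOrthogonal, LinearMap.mem_range, forall_exists_index, forall_apply_eq_imp_iff,
    mulVecLin_apply, dotProduct_comm (S *ᵥ _), dotProduct_mulVec, ← mulVec_transpose]
  exact dotProduct_eq_zero_iff.symm

lemma eq_of_sub_mem_of_log_sub_mem_dotOrthogonal {V : Submodule ℝ (ι → ℝ)} {x y : ι → ℝ}
    (hx : ∀ k, 0 < x k) (hy : ∀ k, 0 < y k) (hV : x - y ∈ V)
    (hlog : (fun k => log (x k)) - (fun k => log (y k)) ∈ dotOrthogonal V) : x = y := by
  have hdot := mem_dotOrthogonal.1 hlog _ hV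
  by_contra hne
  obtain ⟨k, hk⟩ := Function.ne_iff.1 hne
  refine (Finset.sum_pos' (fun j _ => ?_)
    ⟨k, Finset.mem_univ k, sub_mul_log_sub_pos (hx k) (hy k) hk⟩).ne' hdot
  rcases eq_or_ne (x j) (y j) with h | h
  · simp [h]
  · exact (sub_mul_log_sub_pos (hx j) (hy j) h).le

end DotOrthogonal

section BirchPotential

variable {ι : Type*} [Fintype ι]

noncomputable def birchPotential (xs x0 w : ι → ℝ) : ℝ :=
  ∑ k, (xs k * exp (w k) - x0 k * w k)

lemma continuous_birchPotential (xs x0 : ι → ℝ) : Continuous (birchPotential xs x0) := by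
  unfold birchPotential
  fun_prop

lemma tendsto_birchPotential_cocompact {xs x0 : ι → ℝ} (hxs : ∀ k, 0 < xs k)
    (hx0 : ∀ k, 0 < x0 k) : Tendsto (birchPotential xs x0) (cocompact (ι → ℝ)) atTop := by
  have hg k := tendsto_mul_exp_sub_mul_cocompact (hxs k) (hx0 k)
  refine tendsto_sum_comp_eval_cocompact hg fun k => ?_
  obtain ⟨t, ht⟩ :=
    (by fun_prop : Continuous fun t => xs k * exp t - x0 k * t).exists_forall_le (hg k)
  exact ⟨_, Set.forall_mem_range.2 ht⟩

lemma exists_isMinOn_birchPotential (W : Submodule ℝ (ι → ℝ)) {xs x0 : ι → ℝ}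
    (hxs : ∀ k, 0 < xs k) (hx0 : ∀ k, 0 < x0 k) :
    ∃ w ∈ W, IsMinOn (birchPotential xs x0) W w :=
  (continuous_birchPotential xs x0).continuousOn.exists_isMinOn' W.closed_of_finiteDimensional
    W.zero_mem
    (((tendsto_birchPotential_cocompact hxs hx0).eventually_ge_atTop _).filter_mono inf_le_left)

lemma hasDerivAt_birchPotential_add_smul (xs x0 w v : ι → ℝ) :
    HasDerivAt (fun t : ℝ => birchPotential xs x0 (w + t • v))
      ((fun k => xs k * exp (w k) - x0 k) ⬝ᵥ v) 0 := by
  have hline k : HasDerivAt (fun t : ℝ => w k + t * v k) (v k) 0 := by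
    simpa using (hasDerivAt_mul_const (v k)).const_add (w k)
  refine (HasDerivAt.fun_sum (u := Finset.univ) fun k _ =>
    ((hline k).exp.const_mul (xs k)).fun_sub ((hline k).const_mul (x0 k))).congr_deriv ?_
  simp [dotProduct, sub_mul, mul_assoc]

end BirchPotential

section Birch

variable {ι : Type*} [Fintype ι]

lemma exists_pos_sub_mem_log_sub_mem_dotOrthogonal (V : Submodule ℝ (ι → ℝ)) {xs x0 : ι → ℝ}
    (hxs : ∀ k, 0 < xs k) (hx0 : ∀ k, 0 < x0 k) :
    ∃ x1 : ι → ℝ, (∀ k, 0 < x1 k) ∧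
      (fun k => log (x1 k)) - (fun k => log (xs k)) ∈ dotOrthogonal V ∧ x1 - x0 ∈ V := by
  obtain ⟨w, hwW, hmin⟩ := exists_isMinOn_birchPotential (dotOrthogonal V) hxs hx0
  refine ⟨fun k => xs k * exp (w k), fun k => by have := hxs k; positivity, ?_, ?_⟩
  · convert hwW using 1
    ext k
    simp [log_mul (hxs k).ne' (exp_pos _).ne']
  · rw [← dotOrthogonal_dotOrthogonal V, mem_dotOrthogonal]
    intro v hv
    rw [dotProduct_comm]
    exact hmin.hasDerivAt_add_smul_eq_zero hwW hv (hasDerivAt_birchPotential_add_smul xs x0 w v)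

theorem existsUnique_pos_sub_mem_log_sub_mem_dotOrthogonal (V : Submodule ℝ (ι → ℝ))
    {xs x0 : ι → ℝ} (hxs : ∀ k, 0 < xs k) (hx0 : ∀ k, 0 < x0 k) :
    ∃! x1 : ι → ℝ, (∀ k, 0 < x1 k) ∧
      (fun k => log (x1 k)) - (fun k => log (xs k)) ∈ dotOrthogonal V ∧ x1 - x0 ∈ V := by
  obtain ⟨x1, hx1, hlog1, hV1⟩ := exists_pos_sub_mem_log_sub_mem_dotOrthogonal V hxs hx0
  refine ⟨x1, ⟨hx1, hlog1, hV1⟩, fun y ⟨hy, hlogy, hVy⟩ => ?_⟩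
  refine eq_of_sub_mem_of_log_sub_mem_dotOrthogonal (V := V) hy hx1 ?_ ?_
  · simpa using V.sub_mem hVy hV1
  · simpa using (dotOrthogonal V).sub_mem hlogy hlog1

end Birch

/-- (Feinberg; used in Theorem 4, part (3).) Given a stoichiometric matrix `S`, a positive
equilibrium `x*` and a positive initial condition `x₀`, there is a unique positive `x₁`
with `Sᵀ Ln x₁ = Sᵀ Ln x*` and `x₁ − x₀ ∈ im S`. -/
theorem stmt_12 (m r : ℕ) (S : Matrix (Fin m) (Fin r) ℝ)
    (xs x0 : Fin m → ℝ) (hxs : ∀ k, 0 < xs k) (hx0 : ∀ k, 0 < x0 k) :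
    ∃! x1 : Fin m → ℝ, (∀ k, 0 < x1 k) ∧
      Sᵀ.mulVec (fun k => Real.log (x1 k)) = Sᵀ.mulVec (fun k => Real.log (xs k)) ∧
      x1 - x0 ∈ LinearMap.range S.mulVecLin := by
  have hlog (x : Fin m → ℝ) : Sᵀ *ᵥ (fun k => log (x k)) = Sᵀ *ᵥ (fun k => log (xs k)) ↔
      (fun k => log (x k)) - (fun k => log (xs k)) ∈
        dotOrthogonal (LinearMap.range S.mulVecLin) := by
    rw [← transpose_mulVec_eq_zero_iff, mulVec_sub, sub_eq_zero]
  simp_rw [hlog]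
  exact existsUnique_pos_sub_mem_log_sub_mem_dotOrthogonal _ hxs hx0
end

section
/- Let L_e be a real (c+1)×(c+1) matrix whose off-diagonal entries are nonpositive and all of whose column sums are zero, such that the directed graph on vertices {1,…,c+1} with an edge from i to j (i ≠ j) whenever (L_e)_{ji} ≠ 0 is strongly connected. Let Z_e be an m×(c+1) matrix with nonnegative integer entries whose last column is zero, and assume every species appears in some complex, i.e. for every 1 ≤ k ≤ m there exists 1 ≤ i ≤ c with (Z_e)_{ki} > 0. Define ψ : ℝ^m_{≥0} → ℝ^{c+1} by ψ_i(x) = Π_{k=1}^m x_k^{(Z_e)_{ki}} (so ψ_{c+1}(x) = 1). Then there is no vector x on the boundary of the nonnegative orthant (i.e. x ≥ 0 componentwise with at least one component equal to zero) satisfying L_e ψ(x) = 0. -/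
/-!
If `x` has a zero coordinate `x k₀`, then `ψ` vanishes at every complex containing species `k₀`,
and such a complex exists among the first `c`. Row `i` of `L_e ψ = 0` reads
`L_ii ψ_i = -∑_{j ≠ i} L_ij ψ_j`, a sum of nonpositive terms, so `ψ_i = 0` forces `ψ_j = 0`
for every edge `j → i`. By strong connectivity the zero then spreads to the zero complex,
where `ψ ≡ 1`.
-/

open Matrix

section ZeroPropagation

variable {ι R : Type*} [Fintype ι] [Ring R] [LinearOrder R] [IsStrictOrderedRing R]
  {L : Matrix ι ι R} {v : ι → R}

theorem Matrix.apply_eq_zero_of_mulVec_eq_zero_of_offDiag_nonpos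
    (hoff : ∀ i j, i ≠ j → L i j ≤ 0) (hv : 0 ≤ v) (hLv : L *ᵥ v = 0)
    {i j : ι} (hi : v i = 0) (hji : j ≠ i) (hL : L i j ≠ 0) : v j = 0 := by
  classical
  have hrow : ∑ a ∈ Finset.univ.erase i, L i a * v a = 0 := by
    have h := congrFun hLv i
    rwa [mulVec, dotProduct, ← Finset.add_sum_erase _ _ (Finset.mem_univ i), hi, mul_zero,
      zero_add] at h
  have hterms : ∀ a ∈ Finset.univ.erase i, L i a * v a ≤ 0 := fun a ha =>
    mul_nonpos_of_nonpos_of_nonneg (hoff i a (Finset.ne_of_mem_erase ha).symm) (hv a)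
  have hterm := (Finset.sum_eq_zero_iff_of_nonpos hterms).mp hrow j
    (Finset.mem_erase.mpr ⟨hji, Finset.mem_univ j⟩)
  exact (mul_eq_zero.mp hterm).resolve_left hL

theorem Matrix.apply_eq_zero_of_mulVec_eq_zero_of_reflTransGen
    (hoff : ∀ i j, i ≠ j → L i j ≤ 0) (hv : 0 ≤ v) (hLv : L *ᵥ v = 0)
    {a b : ι} (hab : Relation.ReflTransGen (fun a b => a ≠ b ∧ L b a ≠ 0) a b)
    (hb : v b = 0) : v a = 0 := by
  induction hab using Relation.ReflTransGen.head_induction_on with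
  | refl => exact hb
  | head hac _ ih =>
    exact apply_eq_zero_of_mulVec_eq_zero_of_offDiag_nonpos hoff hv hLv ih hac.1 hac.2

end ZeroPropagation

theorem stmt_14_general (m c : ℕ) (Le : Matrix (Fin (c + 1)) (Fin (c + 1)) ℝ)
    (hoff : ∀ i j, i ≠ j → Le i j ≤ 0)
    (hsc : ∀ i j : Fin (c + 1),
      Relation.ReflTransGen (fun a b => a ≠ b ∧ Le b a ≠ 0) i j)
    (Ze : Matrix (Fin m) (Fin (c + 1)) ℕ)
    (hlast : ∀ k, Ze k (Fin.last c) = 0)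
    (hspecies : ∀ k : Fin m, ∃ i : Fin c, 0 < Ze k i.castSucc) :
    ¬ ∃ x : Fin m → ℝ, (∀ k, 0 ≤ x k) ∧ (∃ k, x k = 0) ∧
        Le.mulVec (fun i => ∏ k, x k ^ Ze k i) = 0 := by
  rintro ⟨x, hx, ⟨k₀, hk₀⟩, hLψ⟩
  obtain ⟨i₀, hi₀⟩ := hspecies k₀
  have hψ_nonneg : 0 ≤ fun i => ∏ k, x k ^ Ze k i := fun i =>
    Finset.prod_nonneg fun k _ => pow_nonneg (hx k) _
  have hψ_i₀ : ∏ k, x k ^ Ze k i₀.castSucc = 0 :=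
    Finset.prod_eq_zero (Finset.mem_univ k₀) (by rw [hk₀, zero_pow hi₀.ne'])
  have hψ_last := apply_eq_zero_of_mulVec_eq_zero_of_reflTransGen hoff hψ_nonneg hLψ
    (hsc (Fin.last c) i₀.castSucc) hψ_i₀
  simp [hlast] at hψ_last

/-- No boundary steady states: for a strongly connected extended graph of complexes with
out-degree Laplacian `L_e` (edge `i → j` iff `(L_e)_{ji} ≠ 0`), zero-complex composition
column zero, and every species appearing in some complex, there is no nonnegative vector
`x` with a zero component satisfying `L_e ψ(x) = 0`, where `ψᵢ(x) = Πₖ xₖ^{(Z_e)_{ki}}`. -/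
theorem stmt_14 (m c : ℕ) (Le : Matrix (Fin (c + 1)) (Fin (c + 1)) ℝ)
    (hoff : ∀ i j, i ≠ j → Le i j ≤ 0)
    (hcol : ∀ j, ∑ i, Le i j = 0)
    (hsc : ∀ i j : Fin (c + 1),
      Relation.ReflTransGen (fun a b => a ≠ b ∧ Le b a ≠ 0) i j)
    (Ze : Matrix (Fin m) (Fin (c + 1)) ℕ)
    (hlast : ∀ k, Ze k (Fin.last c) = 0)
    (hspecies : ∀ k : Fin m, ∃ i : Fin c, 0 < Ze k i.castSucc) :
    ¬ ∃ x : Fin m → ℝ, (∀ k, 0 ≤ x k) ∧ (∃ k, x k = 0) ∧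
        Le.mulVec (fun i => ∏ k, x k ^ Ze k i) = 0 :=
  stmt_14_general m c Le hoff hsc Ze hlast hspecies
end

section
/- Let 𝓛 be a real n×n matrix whose off-diagonal entries are nonpositive and whose row sums and column sums are all zero, and partition the index set into two nonempty subsets giving the block form 𝓛 = [[𝓛_11, 𝓛_12],[𝓛_21, 𝓛_22]], where 𝓛_22 is the principal submatrix indexed by the set of deleted vertices and is assumed invertible. Then the Schur complement 𝓛̂ = 𝓛_11 − 𝓛_12 𝓛_22^{-1} 𝓛_21 again has nonpositive off-diagonal entries, nonnegative diagonal entries, and all row sums and all column sums equal to zero (𝟙ᵀ𝓛̂ = 0 and 𝓛̂𝟙 = 0). -/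
/-!
The block `𝓛₂₂` of deleted vertices has nonpositive off-diagonal entries and, since the
entries of `𝓛₂₁` are nonpositive, nonnegative row sums; being invertible, it is a nonsingular
M-matrix, so `𝓛₂₂⁻¹ ≥ 0` entrywise (by the minimum principle: if `A` has strictly positive row
sums and `A x ≥ 0`, then at a minimum `k` of `x` we get `(A x)_k ≤ (∑ⱼ A k j) x_k`, so `x ≥ 0`).
Hence `𝓛₁₂ 𝓛₂₂⁻¹ 𝓛₂₁ ≥ 0`, which gives the off-diagonal signs. Zero row sums survive because
eliminating `x₂` from `𝓛 x = 0` gives `𝓛̂ x₁ = 0`; apply this to `x = 𝟙`, and its transpose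
version for column sums. The diagonal is then nonnegative, being minus the off-diagonal sum.
-/

open Matrix Finset Filter Topology

namespace Matrix

section Sign

variable {n : Type*} [Fintype n]

theorem nonneg_of_mulVec_nonneg_of_rowSum_pos {A : Matrix n n ℝ} (hoff : ∀ i j, i ≠ j → A i j ≤ 0)
    (hrow : ∀ i, 0 < ∑ j, A i j) {x : n → ℝ} (hx : 0 ≤ A *ᵥ x) : 0 ≤ x := by
  intro i
  by_contra! hneg
  obtain ⟨k, -, hk⟩ := exists_min_image univ x ⟨i, mem_univ i⟩
  have hle : (A *ᵥ x) k ≤ (∑ j, A k j) * x k := by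
    rw [sum_mul, mulVec, dotProduct]
    refine sum_le_sum fun j _ => ?_
    rcases eq_or_ne k j with rfl | hkj
    · exact le_rfl
    · exact mul_le_mul_of_nonpos_left (hk j (mem_univ j)) (hoff k j hkj)
  have hxk : x k < 0 := (hk i (mem_univ i)).trans_lt hneg
  exact (hx k).not_gt (hle.trans_lt (mul_neg_of_pos_of_neg (hrow k) hxk))

variable [DecidableEq n]

theorem isUnit_det_of_offDiag_nonpos_of_rowSum_pos {A : Matrix n n ℝ}
    (hoff : ∀ i j, i ≠ j → A i j ≤ 0) (hrow : ∀ i, 0 < ∑ j, A i j) : IsUnit A.det := by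
  rw [isUnit_iff_ne_zero]
  intro hdet
  obtain ⟨v, hv, hAv⟩ := exists_mulVec_eq_zero_iff.mpr hdet
  have hpos := nonneg_of_mulVec_nonneg_of_rowSum_pos hoff hrow (x := v) (by simp [hAv])
  have hneg := nonneg_of_mulVec_nonneg_of_rowSum_pos hoff hrow (x := -v) (by simp [mulVec_neg, hAv])
  exact hv (funext fun i => le_antisymm (by simpa using hneg i) (hpos i))

theorem inv_nonneg_of_offDiag_nonpos_of_rowSum_pos {A : Matrix n n ℝ}
    (hoff : ∀ i j, i ≠ j → A i j ≤ 0) (hrow : ∀ i, 0 < ∑ j, A i j) (i j : n) :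
    0 ≤ A⁻¹ i j := by
  have hA := isUnit_det_of_offDiag_nonpos_of_rowSum_pos hoff hrow
  have hcol : A *ᵥ (A⁻¹ *ᵥ Pi.single j 1) = Pi.single j 1 := by
    rw [mulVec_mulVec, mul_nonsing_inv A hA, one_mulVec]
  have := nonneg_of_mulVec_nonneg_of_rowSum_pos hoff hrow (x := A⁻¹ *ᵥ Pi.single j 1)
    (by rw [hcol]; exact Pi.single_nonneg.mpr zero_le_one) i
  simpa [mulVec_single_one] using this

/- Perturbing to `A + ε • 1` makes the row sums strictly positive; let `ε → 0⁺` using the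
continuity of inversion at the invertible `A`. -/
theorem inv_nonneg_of_offDiag_nonpos_of_rowSum_nonneg {A : Matrix n n ℝ}
    (hoff : ∀ i j, i ≠ j → A i j ≤ 0) (hrow : ∀ i, 0 ≤ ∑ j, A i j) (hA : IsUnit A.det)
    (i j : n) : 0 ≤ A⁻¹ i j := by
  have hshift : ∀ ε : ℝ, 0 < ε → 0 ≤ (A + ε • 1)⁻¹ i j := fun ε hε =>
    inv_nonneg_of_offDiag_nonpos_of_rowSum_pos
      (fun a b hab => by simpa [one_apply_ne hab] using hoff a b hab)
      (fun a => by
        simpa [sum_add_distrib, one_apply] using add_pos_of_nonneg_of_pos (hrow a) hε) i j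
  have hinv : ContinuousAt Inv.inv A :=
    continuousAt_matrix_inv A (NormedRing.inverse_continuousAt hA.unit)
  have hlim : Tendsto (fun ε : ℝ => A + ε • 1) (𝓝[>] 0) (𝓝 A) := by
    have : Continuous fun ε : ℝ => A + ε • (1 : Matrix n n ℝ) := by fun_prop
    simpa using (this.tendsto 0).mono_left nhdsWithin_le_nhds
  have hentry := tendsto_pi_nhds.mp (tendsto_pi_nhds.mp (hinv.tendsto.comp hlim) i) j
  exact ge_of_tendsto hentry (eventually_nhdsWithin_of_forall hshift)

end Sign

section KronReduction

variable {m n R : Type*} [Fintype n] [DecidableEq n] [CommRing R]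

noncomputable def kronReduction (L : Matrix (m ⊕ n) (m ⊕ n) R) : Matrix m m R :=
  L.toBlocks₁₁ - L.toBlocks₁₂ * L.toBlocks₂₂⁻¹ * L.toBlocks₂₁

theorem kronReduction_mulVec_eq_zero [Fintype m] {L : Matrix (m ⊕ n) (m ⊕ n) R}
    (hD : IsUnit L.toBlocks₂₂.det) {x : m ⊕ n → R} (hx : L *ᵥ x = 0) :
    kronReduction L *ᵥ (x ∘ Sum.inl) = 0 := by
  rw [← fromBlocks_toBlocks L, fromBlocks_mulVec, ← Sum.elim_zero_zero, Sum.elim_eq_iff] at hx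
  obtain ⟨htop, hbot⟩ := hx
  have hxr : L.toBlocks₂₂⁻¹ *ᵥ (L.toBlocks₂₁ *ᵥ (x ∘ Sum.inl)) = -(x ∘ Sum.inr) := by
    rw [eq_neg_of_add_eq_zero_left hbot, mulVec_neg, mulVec_mulVec, nonsing_inv_mul _ hD,
      one_mulVec]
  rw [kronReduction, sub_mulVec, ← mulVec_mulVec, ← mulVec_mulVec, hxr, mulVec_neg,
    sub_neg_eq_add, htop]

theorem vecMul_kronReduction_eq_zero [Fintype m] {L : Matrix (m ⊕ n) (m ⊕ n) R}
    (hD : IsUnit L.toBlocks₂₂.det) {x : m ⊕ n → R} (hx : x ᵥ* L = 0) :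
    (x ∘ Sum.inl) ᵥ* kronReduction L = 0 := by
  rw [← fromBlocks_toBlocks L, vecMul_fromBlocks, ← Sum.elim_zero_zero, Sum.elim_eq_iff] at hx
  obtain ⟨hleft, hright⟩ := hx
  have hxr : (x ∘ Sum.inl) ᵥ* L.toBlocks₁₂ ᵥ* L.toBlocks₂₂⁻¹ = -(x ∘ Sum.inr) := by
    rw [eq_neg_of_add_eq_zero_left hright, neg_vecMul, vecMul_vecMul, mul_nonsing_inv _ hD,
      vecMul_one]
  rw [kronReduction, vecMul_sub, ← vecMul_vecMul, ← vecMul_vecMul, hxr, neg_vecMul,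
    sub_neg_eq_add, hleft]

theorem kronReduction_rowSum_eq_zero [Fintype m] {L : Matrix (m ⊕ n) (m ⊕ n) R}
    (hD : IsUnit L.toBlocks₂₂.det) (hrow : ∀ i, ∑ j, L i j = 0) (i : m) :
    ∑ j, kronReduction L i j = 0 := by
  have hL : L *ᵥ 1 = 0 := funext fun k => by simpa [mulVec, dotProduct] using hrow k
  simpa [mulVec, dotProduct] using congrFun (kronReduction_mulVec_eq_zero hD hL) i

theorem kronReduction_colSum_eq_zero [Fintype m] {L : Matrix (m ⊕ n) (m ⊕ n) R}
    (hD : IsUnit L.toBlocks₂₂.det) (hcol : ∀ j, ∑ i, L i j = 0) (j : m) :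
    ∑ i, kronReduction L i j = 0 := by
  have hL : 1 ᵥ* L = 0 := funext fun k => by simpa [vecMul, dotProduct] using hcol k
  simpa [vecMul, dotProduct] using congrFun (vecMul_kronReduction_eq_zero hD hL) j

end KronReduction

section Laplacian

variable {m n : Type*} [Fintype n]

theorem diag_nonneg_of_offDiag_nonpos_of_rowSum_nonneg [Fintype m] [DecidableEq m]
    {A : Matrix m m ℝ}
    (hoff : ∀ i j, i ≠ j → A i j ≤ 0) (hrow : ∀ i, 0 ≤ ∑ j, A i j) (i : m) : 0 ≤ A i i := by
  have hrest : ∑ j ∈ univ.erase i, A i j ≤ 0 :=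
    sum_nonpos fun j hj => hoff i j (ne_of_mem_erase hj).symm
  linarith [hrow i, add_sum_erase univ (A i) (mem_univ i)]

theorem rowSum_toBlocks₂₂_nonneg [Fintype m] {L : Matrix (m ⊕ n) (m ⊕ n) ℝ}
    (hoff : ∀ i j, i ≠ j → L i j ≤ 0) (hrow : ∀ i, 0 ≤ ∑ j, L i j) (a : n) :
    0 ≤ ∑ b, L.toBlocks₂₂ a b := by
  have hC : ∑ j, L (Sum.inr a) (Sum.inl j) ≤ 0 := sum_nonpos fun j _ => hoff _ _ Sum.inr_ne_inl
  have hsum := hrow (Sum.inr a)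
  rw [Fintype.sum_sum_type] at hsum
  change 0 ≤ ∑ b, L (Sum.inr a) (Sum.inr b)
  linarith

theorem kronReduction_apply_nonpos [DecidableEq n] {L : Matrix (m ⊕ n) (m ⊕ n) ℝ}
    (hoff : ∀ i j, i ≠ j → L i j ≤ 0) (hD : ∀ a b, 0 ≤ L.toBlocks₂₂⁻¹ a b) {i j : m}
    (hij : i ≠ j) : kronReduction L i j ≤ 0 := by
  have hcorr : 0 ≤ (L.toBlocks₁₂ * L.toBlocks₂₂⁻¹ * L.toBlocks₂₁) i j := by
    refine sum_nonneg fun b _ => mul_nonneg_of_nonpos_of_nonpos ?_ (hoff _ _ Sum.inr_ne_inl)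
    exact sum_nonpos fun a _ => mul_nonpos_of_nonpos_of_nonneg (hoff _ _ Sum.inl_ne_inr) (hD a b)
  have hA : L.toBlocks₁₁ i j ≤ 0 := hoff _ _ (Sum.inl_injective.ne hij)
  simp only [kronReduction, sub_apply]
  linarith

end Laplacian

end Matrix

theorem stmt_15_general (p q : ℕ)
    (L : Matrix (Fin p ⊕ Fin q) (Fin p ⊕ Fin q) ℝ)
    (hoff : ∀ i j, i ≠ j → L i j ≤ 0)
    (hrow : ∀ i, ∑ j, L i j = 0)
    (hcol : ∀ j, ∑ i, L i j = 0)
    (hinv : IsUnit (L.toBlocks₂₂).det) :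
    (∀ i j, i ≠ j →
      (L.toBlocks₁₁ - L.toBlocks₁₂ * (L.toBlocks₂₂)⁻¹ * L.toBlocks₂₁) i j ≤ 0) ∧
    (∀ i, 0 ≤ (L.toBlocks₁₁ - L.toBlocks₁₂ * (L.toBlocks₂₂)⁻¹ * L.toBlocks₂₁) i i) ∧
    (∀ i, ∑ j, (L.toBlocks₁₁ - L.toBlocks₁₂ * (L.toBlocks₂₂)⁻¹ * L.toBlocks₂₁) i j = 0) ∧
    (∀ j, ∑ i, (L.toBlocks₁₁ - L.toBlocks₁₂ * (L.toBlocks₂₂)⁻¹ * L.toBlocks₂₁) i j = 0) := by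
  have hinv_nonneg : ∀ a b, 0 ≤ L.toBlocks₂₂⁻¹ a b :=
    inv_nonneg_of_offDiag_nonpos_of_rowSum_nonneg
      (fun a b hab => hoff _ _ (Sum.inr_injective.ne hab))
      (rowSum_toBlocks₂₂_nonneg hoff fun i => (hrow i).ge) hinv
  have hoffK : ∀ i j, i ≠ j → kronReduction L i j ≤ 0 := fun _ _ =>
    kronReduction_apply_nonpos hoff hinv_nonneg
  have hrowK := kronReduction_rowSum_eq_zero hinv hrow
  exact ⟨hoffK, diag_nonneg_of_offDiag_nonpos_of_rowSum_nonneg hoffK fun i => (hrowK i).ge,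
    hrowK, kronReduction_colSum_eq_zero hinv hcol⟩

/-- (Proposition 4, properties (1)-(2).) The Schur complement (Kron reduction) of a
balanced Laplacian matrix with respect to an invertible principal submatrix of deleted
vertices is again a balanced Laplacian: nonpositive off-diagonal entries, nonnegative
diagonal entries, and zero row and column sums. -/
theorem stmt_15 (p q : ℕ) (hp : 0 < p) (hq : 0 < q)
    (L : Matrix (Fin p ⊕ Fin q) (Fin p ⊕ Fin q) ℝ)
    (hoff : ∀ i j, i ≠ j → L i j ≤ 0)
    (hrow : ∀ i, ∑ j, L i j = 0)
    (hcol : ∀ j, ∑ i, L i j = 0)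
    (hinv : IsUnit (L.toBlocks₂₂).det) :
    (∀ i j, i ≠ j →
      (L.toBlocks₁₁ - L.toBlocks₁₂ * (L.toBlocks₂₂)⁻¹ * L.toBlocks₂₁) i j ≤ 0) ∧
    (∀ i, 0 ≤ (L.toBlocks₁₁ - L.toBlocks₁₂ * (L.toBlocks₂₂)⁻¹ * L.toBlocks₂₁) i i) ∧
    (∀ i, ∑ j, (L.toBlocks₁₁ - L.toBlocks₁₂ * (L.toBlocks₂₂)⁻¹ * L.toBlocks₂₁) i j = 0) ∧
    (∀ j, ∑ i, (L.toBlocks₁₁ - L.toBlocks₁₂ * (L.toBlocks₂₂)⁻¹ * L.toBlocks₂₁) i j = 0) :=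
  stmt_15_general p q L hoff hrow hcol hinv
end

section
/- Let Z_e = [Z_1 Z_2] be a real m×(c+1) matrix with nonnegative entries partitioned according to a partition of {1,…,c+1} into retained indices 𝒱_r (with submatrix Z_1) and deleted indices 𝒱_o (with submatrix Z_2), let 𝓛 be a real (c+1)×(c+1) matrix with nonpositive off-diagonal entries and zero row and column sums, partitioned conformally as [[𝓛_11, 𝓛_12],[𝓛_21, 𝓛_22]] with 𝓛_22 invertible, and let x* ∈ ℝ^m be strictly positive. If a strictly positive x ∈ ℝ^m satisfies Z_e 𝓛 Exp(Z_eᵀ Ln(x/x*)) = 0, then it also satisfies Z_1 𝓛̂ Exp(Z_1ᵀ Ln(x/x*)) = 0, where 𝓛̂ = 𝓛_11 − 𝓛_12 𝓛_22^{-1} 𝓛_21 is the Schur complement. In other words, the set of positive steady states of the original network is contained in the set of positive steady states of the Kron-reduced network. -/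
/-!
Pair the steady-state equation with `y = Ln(x/x*)`: since `Z_eᵀ y = Ln μ` for
`μ = Exp(Z_eᵀ y)`, this gives `(Ln μ)ᵀ 𝓛 μ = 0`. For a Laplacian with zero row and column sums,
`-(Ln μ)ᵀ 𝓛 μ = ∑ᵢⱼ 𝓛ᵢⱼ μᵢ klFun(μⱼ/μᵢ)`, a sum of nonpositive terms, so `μᵢ = μⱼ` along every
edge and hence `𝓛 μ = 0`. Eliminating the deleted block of `𝓛 μ = 0` gives `𝓛̂ μ₁ = 0`, and
`μ₁ = Exp(Z₁ᵀ y)`.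
-/

open Matrix Real InformationTheory

lemma mul_klFun_div {u v : ℝ} (hu : 0 < u) (hv : 0 < v) :
    u * klFun (v / u) = v * log v - v * log u + u - v := by
  rw [klFun, log_div hv.ne' hu.ne']
  field_simp

namespace Matrix

section Laplacian

variable {ι : Type*} [Fintype ι] {L : Matrix ι ι ℝ}

lemma sum_sum_mul_left_eq_zero_of_sum_row (hrow : ∀ i, ∑ j, L i j = 0) (f : ι → ℝ) :
    ∑ i, ∑ j, L i j * f i = 0 := by
  simp [← Finset.sum_mul, hrow]

lemma sum_sum_mul_right_eq_zero_of_sum_col (hcol : ∀ j, ∑ i, L i j = 0) (f : ι → ℝ) :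
    ∑ i, ∑ j, L i j * f j = 0 := by
  rw [Finset.sum_comm]
  simp [← Finset.sum_mul, hcol]

lemma log_dotProduct_mulVec_eq_neg_sum_klFun (hrow : ∀ i, ∑ j, L i j = 0)
    (hcol : ∀ j, ∑ i, L i j = 0) {μ : ι → ℝ} (hμ : ∀ i, 0 < μ i) :
    (fun i => log (μ i)) ⬝ᵥ L *ᵥ μ = -∑ i, ∑ j, L i j * (μ i * klFun (μ j / μ i)) := by
  simp only [mul_klFun_div (hμ _) (hμ _), mul_add, mul_sub, Finset.sum_add_distrib,
    Finset.sum_sub_distrib, sum_sum_mul_left_eq_zero_of_sum_row hrow,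
    sum_sum_mul_right_eq_zero_of_sum_col hcol (fun j => μ j * log (μ j)),
    sum_sum_mul_right_eq_zero_of_sum_col hcol μ]
  simp only [dotProduct, mulVec, Finset.mul_sum, zero_sub, add_zero, sub_zero, neg_neg]
  exact Finset.sum_congr rfl fun i _ => Finset.sum_congr rfl fun j _ => by ring

lemma mul_sub_eq_zero_of_log_dotProduct_mulVec_eq_zero (hoff : ∀ i j, i ≠ j → L i j ≤ 0)
    (hrow : ∀ i, ∑ j, L i j = 0) (hcol : ∀ j, ∑ i, L i j = 0) {μ : ι → ℝ} (hμ : ∀ i, 0 < μ i)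
    (h : (fun i => log (μ i)) ⬝ᵥ L *ᵥ μ = 0) (i j : ι) : L i j * (μ j - μ i) = 0 := by
  have hnonpos : ∀ i j, L i j * (μ i * klFun (μ j / μ i)) ≤ 0 := by
    intro i j
    by_cases hij : i = j
    · simp [hij, div_self (hμ j).ne', klFun_one]
    · exact mul_nonpos_of_nonpos_of_nonneg (hoff i j hij)
        (mul_nonneg (hμ i).le (klFun_nonneg (div_pos (hμ j) (hμ i)).le))
  have hsum : ∑ i, ∑ j, L i j * (μ i * klFun (μ j / μ i)) = 0 := by
    rwa [log_dotProduct_mulVec_eq_neg_sum_klFun hrow hcol hμ, neg_eq_zero] at h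
  have hrow_i := (Finset.sum_eq_zero_iff_of_nonpos fun i _ =>
    Finset.sum_nonpos fun j _ => hnonpos i j).1 hsum i (Finset.mem_univ i)
  rcases mul_eq_zero.1 ((Finset.sum_eq_zero_iff_of_nonpos fun j _ => hnonpos i j).1 hrow_i j
    (Finset.mem_univ j)) with hL | hk
  · rw [hL, zero_mul]
  · rw [mul_eq_zero, klFun_eq_zero_iff (div_pos (hμ j) (hμ i)).le,
      div_eq_one_iff_eq (hμ i).ne'] at hk
    rw [hk.resolve_left (hμ i).ne', sub_self, mul_zero]

lemma mulVec_eq_zero_of_log_dotProduct_mulVec_eq_zero (hoff : ∀ i j, i ≠ j → L i j ≤ 0)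
    (hrow : ∀ i, ∑ j, L i j = 0) (hcol : ∀ j, ∑ i, L i j = 0) {μ : ι → ℝ} (hμ : ∀ i, 0 < μ i)
    (h : (fun i => log (μ i)) ⬝ᵥ L *ᵥ μ = 0) : L *ᵥ μ = 0 := by
  ext i
  calc (L *ᵥ μ) i = ∑ j, L i j * (μ j - μ i) := by
        simp [mulVec, dotProduct, mul_sub, ← Finset.sum_mul, hrow]
    _ = 0 := Finset.sum_eq_zero fun j _ =>
        mul_sub_eq_zero_of_log_dotProduct_mulVec_eq_zero hoff hrow hcol hμ h i j

end Laplacian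

lemma schur_mulVec_inl_eq_zero {α β R : Type*} [Fintype α] [Fintype β] [DecidableEq β]
    [CommRing R] {L : Matrix (α ⊕ β) (α ⊕ β) R} (hD : IsUnit L.toBlocks₂₂.det)
    {v : α ⊕ β → R} (hv : L *ᵥ v = 0) :
    (L.toBlocks₁₁ - L.toBlocks₁₂ * L.toBlocks₂₂⁻¹ * L.toBlocks₂₁) *ᵥ (v ∘ Sum.inl) = 0 := by
  rw [← fromBlocks_toBlocks L, fromBlocks_mulVec] at hv
  have h₁ : L.toBlocks₁₁ *ᵥ (v ∘ Sum.inl) + L.toBlocks₁₂ *ᵥ (v ∘ Sum.inr) = 0 := by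
    funext i; simpa using congrFun hv (Sum.inl i)
  have h₂ : L.toBlocks₂₁ *ᵥ (v ∘ Sum.inl) + L.toBlocks₂₂ *ᵥ (v ∘ Sum.inr) = 0 := by
    funext i; simpa using congrFun hv (Sum.inr i)
  have hv₂ : L.toBlocks₂₂⁻¹ *ᵥ L.toBlocks₂₁ *ᵥ (v ∘ Sum.inl) = -(v ∘ Sum.inr) := by
    rw [eq_neg_of_add_eq_zero_left h₂, mulVec_neg, mulVec_mulVec, nonsing_inv_mul _ hD,
      one_mulVec]
  rw [sub_mulVec, ← mulVec_mulVec, ← mulVec_mulVec, hv₂, mulVec_neg, sub_neg_eq_add, h₁]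

end Matrix

theorem stmt_16_general (m p q : ℕ)
    (Ze : Matrix (Fin m) (Fin p ⊕ Fin q) ℝ)
    (L : Matrix (Fin p ⊕ Fin q) (Fin p ⊕ Fin q) ℝ)
    (hoff : ∀ i j, i ≠ j → L i j ≤ 0)
    (hrow : ∀ i, ∑ j, L i j = 0)
    (hcol : ∀ j, ∑ i, L i j = 0)
    (hinv : IsUnit (L.toBlocks₂₂).det)
    (xs : Fin m → ℝ)
    (x : Fin m → ℝ)
    (hsteady : Ze.mulVec (L.mulVec (fun i =>
        Real.exp (Zeᵀ.mulVec (fun k => Real.log (x k / xs k)) i))) = 0) :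
    (Ze.submatrix id Sum.inl).mulVec
      ((L.toBlocks₁₁ - L.toBlocks₁₂ * (L.toBlocks₂₂)⁻¹ * L.toBlocks₂₁).mulVec
        (fun i => Real.exp
          ((Ze.submatrix id Sum.inl)ᵀ.mulVec (fun k => Real.log (x k / xs k)) i))) = 0 := by
  set y : Fin m → ℝ := fun k => log (x k / xs k)
  set μ : Fin p ⊕ Fin q → ℝ := fun i => exp ((Zeᵀ *ᵥ y) i)
  have hpairing : (fun i => log (μ i)) ⬝ᵥ L *ᵥ μ = 0 := by
    rw [show (fun i => log (μ i)) = Zeᵀ *ᵥ y from funext fun _ => log_exp _, mulVec_transpose,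
      ← dotProduct_mulVec, hsteady, dotProduct_zero]
  have hLμ : L *ᵥ μ = 0 :=
    mulVec_eq_zero_of_log_dotProduct_mulVec_eq_zero hoff hrow hcol (fun _ => exp_pos _) hpairing
  change Ze.submatrix id Sum.inl *ᵥ (_ *ᵥ (μ ∘ Sum.inl)) = 0
  rw [schur_mulVec_inl_eq_zero hinv hLμ, mulVec_zero]

/-- (Proposition 4, inclusion ℰ ⊆ ℰ̂.) Every positive steady state of the original open
network `ẋ = −Z_e 𝓛 Exp(Z_eᵀ Ln(x/x*))` is a steady state of the Kron-reduced network
obtained by taking the Schur complement of the balanced Laplacian `𝓛` with respect to the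
deleted complexes and retaining the corresponding columns `Z₁` of `Z_e`. -/
theorem stmt_16 (m p q : ℕ)
    (Ze : Matrix (Fin m) (Fin p ⊕ Fin q) ℝ) (hZe : ∀ k i, 0 ≤ Ze k i)
    (L : Matrix (Fin p ⊕ Fin q) (Fin p ⊕ Fin q) ℝ)
    (hoff : ∀ i j, i ≠ j → L i j ≤ 0)
    (hrow : ∀ i, ∑ j, L i j = 0)
    (hcol : ∀ j, ∑ i, L i j = 0)
    (hinv : IsUnit (L.toBlocks₂₂).det)
    (xs : Fin m → ℝ) (hxs : ∀ k, 0 < xs k)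
    (x : Fin m → ℝ) (hx : ∀ k, 0 < x k)
    (hsteady : Ze.mulVec (L.mulVec (fun i =>
        Real.exp (Zeᵀ.mulVec (fun k => Real.log (x k / xs k)) i))) = 0) :
    (Ze.submatrix id Sum.inl).mulVec
      ((L.toBlocks₁₁ - L.toBlocks₁₂ * (L.toBlocks₂₂)⁻¹ * L.toBlocks₂₁).mulVec
        (fun i => Real.exp
          ((Ze.submatrix id Sum.inl)ᵀ.mulVec (fun k => Real.log (x k / xs k)) i))) = 0 :=
  stmt_16_general m p q Ze L hoff hrow hcol hinv xs x hsteady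
end

section
/- Let L be a real n×n matrix whose off-diagonal entries are nonpositive and whose row sums are all zero (L𝟙 = 0), and suppose σ ∈ ℝ^n is a strictly positive vector with σᵀL = 0. Then, with Σ = diag(σ_1,…,σ_n), the symmetric matrix Σ L + Lᵀ Σ is positive semidefinite; consequently V(x) = xᵀΣx satisfies xᵀ(LᵀΣ + ΣL)x ≥ 0 for all x ∈ ℝ^n, so V is nonincreasing along the consensus dynamics ẋ = −Lx. -/
/-!
`A = ΣL` has nonpositive off-diagonal entries, zero row sums (from `L𝟙 = 0`) and zero column
sums (from `σᵀL = 0`). Zero row and column sums give `2 xᵀAx = ∑ᵢⱼ (-Aᵢⱼ)(xᵢ - xⱼ)²`, which is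
nonnegative, and `ΣL + LᵀΣ = A + Aᵀ` has quadratic form `2 xᵀAx`.
-/

open Matrix

namespace Matrix

variable {ι R : Type*} [Fintype ι] [CommRing R]

theorem two_mul_dotProduct_mulVec_eq_sum_sq {A : Matrix ι ι R} (hrow : A *ᵥ 1 = 0)
    (hcol : 1 ᵥ* A = 0) (x : ι → R) :
    2 * (x ⬝ᵥ A *ᵥ x) = ∑ i, ∑ j, -A i j * (x i - x j) ^ 2 := by
  have hrow' (i : ι) : ∑ j, A i j = 0 := by simpa [mulVec, dotProduct] using congrFun hrow i
  have hcol' (j : ι) : ∑ i, A i j = 0 := by simpa [vecMul, dotProduct] using congrFun hcol j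
  have hrows : ∑ i, ∑ j, A i j * x i ^ 2 = 0 := by simp [← Finset.sum_mul, hrow']
  have hcols : ∑ i, ∑ j, A i j * x j ^ 2 = 0 := by
    rw [Finset.sum_comm]; simp [← Finset.sum_mul, hcol']
  have expand (i j : ι) : -A i j * (x i - x j) ^ 2
      = 2 * (x i * (A i j * x j)) - A i j * x i ^ 2 - A i j * x j ^ 2 := by ring
  simp only [expand, Finset.sum_sub_distrib, hrows, hcols, ← Finset.mul_sum, dotProduct, mulVec]
  ring

variable [LinearOrder R] [IsStrictOrderedRing R]

theorem dotProduct_mulVec_nonneg_of_offDiag_nonpos {A : Matrix ι ι R}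
    (hoff : ∀ i j, i ≠ j → A i j ≤ 0) (hrow : A *ᵥ 1 = 0) (hcol : 1 ᵥ* A = 0) (x : ι → R) :
    0 ≤ x ⬝ᵥ A *ᵥ x := by
  have hsum : 0 ≤ ∑ i, ∑ j, -A i j * (x i - x j) ^ 2 := by
    refine Finset.sum_nonneg fun i _ ↦ Finset.sum_nonneg fun j _ ↦ ?_
    rcases eq_or_ne i j with rfl | hij
    · simp
    · exact mul_nonneg (neg_nonneg.mpr (hoff i j hij)) (sq_nonneg _)
  rw [← two_mul_dotProduct_mulVec_eq_sum_sq hrow hcol] at hsum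
  linarith

theorem posSemidef_add_transpose_of_offDiag_nonpos [StarRing R] [TrivialStar R]
    {A : Matrix ι ι R} (hoff : ∀ i j, i ≠ j → A i j ≤ 0) (hrow : A *ᵥ 1 = 0)
    (hcol : 1 ᵥ* A = 0) : (A + Aᵀ).PosSemidef := by
  refine .of_dotProduct_mulVec_nonneg (isHermitian_iff_isSymm.mpr (isSymm_add_transpose_self A))
    fun x ↦ ?_
  have hq := dotProduct_mulVec_nonneg_of_offDiag_nonpos hoff hrow hcol x
  rw [star_trivial, add_mulVec, dotProduct_add, mulVec_transpose,
    dotProduct_comm x (x ᵥ* A), ← dotProduct_mulVec]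
  linarith

end Matrix

/-- (Section 2.6.) If `L` has nonpositive off-diagonal entries and zero row sums
(`L𝟙 = 0`), and `σ > 0` satisfies `σᵀL = 0`, then with `Σ = diag(σ)` the symmetric matrix
`ΣL + LᵀΣ` is positive semidefinite; consequently `xᵀ(LᵀΣ + ΣL)x ≥ 0` for all `x`, so
`V(x) = xᵀΣx` is nonincreasing along the consensus dynamics `ẋ = −Lx`. -/
theorem stmt_18 (n : ℕ) (L : Matrix (Fin n) (Fin n) ℝ)
    (hoff : ∀ i j, i ≠ j → L i j ≤ 0)
    (hrow : ∀ i, ∑ j, L i j = 0)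
    (σ : Fin n → ℝ) (hσ : ∀ i, 0 < σ i)
    (hσL : Matrix.vecMul σ L = 0) :
    (Matrix.diagonal σ * L + Lᵀ * Matrix.diagonal σ).PosSemidef ∧
    ∀ x : Fin n → ℝ, 0 ≤ x ⬝ᵥ (Lᵀ * Matrix.diagonal σ + Matrix.diagonal σ * L).mulVec x := by
  set A := diagonal σ * L
  have hAoff (i j : Fin n) (hij : i ≠ j) : A i j ≤ 0 := by
    simpa [A, diagonal_mul] using mul_nonpos_of_nonneg_of_nonpos (hσ i).le (hoff i j hij)
  have hLrow : L *ᵥ 1 = 0 := funext fun i ↦ by simpa [mulVec, dotProduct] using hrow i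
  have hArow : A *ᵥ 1 = 0 := by rw [← mulVec_mulVec, hLrow, mulVec_zero]
  have hσ1 : 1 ᵥ* diagonal σ = σ := funext fun i ↦ by simp [vecMul_diagonal]
  have hAcol : 1 ᵥ* A = 0 := by rw [← vecMul_vecMul, hσ1, hσL]
  have hAt : Aᵀ = Lᵀ * diagonal σ := by rw [transpose_mul, diagonal_transpose]
  have hpsd := posSemidef_add_transpose_of_offDiag_nonpos hAoff hArow hAcol
  rw [hAt] at hpsd
  refine ⟨hpsd, fun x ↦ ?_⟩
  simpa [add_comm] using hpsd.dotProduct_mulVec_nonneg x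
end
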